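/- arXiv:1603.00198 — 4 statements merged into one kernel-verified Lean document; each statement's English description precedes it below -/
import Mathlib

section
/- Let T be a tree of diameter d and G a graph of girth greater than d. Then every subgraph of G that is a homomorphic copy of T is in fact isomorphic to T. Consequently, every T*-decomposition of G is a T-decomposition. -/
/-- A loopless multigraph on vertex type `V` with edge type `E`. -/
structure Multigraph (V : Type) (E : Type) where
  ends : E → Sym2 V
  loopless : ∀ e, ¬ (ends e).IsDiag

namespace Multigraph

variable {V E : Type}

/-- Degree of a vertex. -/
noncomputable def deg (G : Multigraph V E) (v : V) : ℕ :=
  Nat.card {e : E // v ∈ G.ends e}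

/-- Degree of a vertex in the spanning subgraph with edge set `H`. -/
noncomputable def degOn (G : Multigraph V E) (H : Set E) (v : V) : ℕ :=
  Nat.card {e : E // e ∈ H ∧ v ∈ G.ends e}

/-- Degree of `v` in colour `j` under the edge-colouring `c`. -/
noncomputable def degCol {C : Type} (G : Multigraph V E) (c : E → C) (j : C) (v : V) : ℕ :=
  Nat.card {e : E // c e = j ∧ v ∈ G.ends e}

/-- Adjacency using only edges from `F`. -/
def Adj (G : Multigraph V E) (F : Set E) (v w : V) : Prop :=
  ∃ e ∈ F, G.ends e = s(v, w)

/-- The spanning subgraph with edge set `F` is connected (on all of `V`). -/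
def ConnectedOn (G : Multigraph V E) (F : Set E) : Prop :=
  ∀ v w : V, Relation.ReflTransGen (G.Adj F) v w

/-- `G` is connected. -/
def Connected (G : Multigraph V E) : Prop := G.ConnectedOn Set.univ

/-- `G` is `k`-edge-connected: removing fewer than `k` edges leaves it connected. -/
def EdgeConnected (G : Multigraph V E) (k : ℕ) : Prop :=
  ∀ F : Finset E, F.card < k → G.ConnectedOn {e | e ∉ F}

/-- The spanning subgraph with edge set `H` is `k`-edge-connected. -/
def EdgeConnectedOn (G : Multigraph V E) (H : Set E) (k : ℕ) : Prop :=
  ∀ F : Finset E, ↑F ⊆ H → F.card < k → G.ConnectedOn (H \ ↑F)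

/-- `S` is the edge set of a spanning tree of `G`. -/
def IsSpanningTree (G : Multigraph V E) (S : Set E) : Prop :=
  G.ConnectedOn S ∧ Nat.card S + 1 = Nat.card V

/-- `G` is a tree (connected with one fewer edge than vertices). -/
def IsTree (G : Multigraph V E) : Prop :=
  G.Connected ∧ Nat.card E + 1 = Nat.card V

/-- `H` is a homomorphic copy of `G`: it is obtained from `G` by identifying vertices,
keeping all edges (the vertex map is surjective and induces a bijection on edges). -/
def IsHomCopy {V' E' : Type} (G : Multigraph V E) (H : Multigraph V' E') : Prop :=
  ∃ (f : V → V') (g : E ≃ E'), Function.Surjective f ∧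
    ∀ e, H.ends (g e) = (G.ends e).map f

/-- `G` and `H` are isomorphic multigraphs. -/
def IsIsomorphic {V' E' : Type} (G : Multigraph V E) (H : Multigraph V' E') : Prop :=
  ∃ (f : V ≃ V') (g : E ≃ E'), ∀ e, H.ends (g e) = (G.ends e).map f

/-- The edge set `S` of `G` forms a subgraph which is a homomorphic copy of `T`. -/
def IsHomCopyOn {VT ET : Type} (T : Multigraph VT ET) (G : Multigraph V E) (S : Set E) : Prop :=
  ∃ (f : VT → V) (g : ET ≃ S), ∀ e, G.ends (g e) = (T.ends e).map f

/-- The edge set `S` of `G` forms a subgraph isomorphic to `T`. -/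
def IsIsoCopyOn {VT ET : Type} (T : Multigraph VT ET) (G : Multigraph V E) (S : Set E) : Prop :=
  ∃ (f : VT → V) (g : ET ≃ S), Function.Injective f ∧
    ∀ e, G.ends (g e) = (T.ends e).map f

/-- `A`, `B` form a bipartition of `G`. -/
def IsBipartition (G : Multigraph V E) (A B : Set V) : Prop :=
  Disjoint A B ∧ A ∪ B = Set.univ ∧ ∀ e : E, ∃ a ∈ A, ∃ b ∈ B, G.ends e = s(a, b)

/-- A `T*`-decomposition: a partition of the edge set of `G` into homomorphic copies of `T`. -/
def HomCopyDecomposition {VT ET : Type} (T : Multigraph VT ET) (G : Multigraph V E) : Prop :=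
  ∃ P : Set (Set E), Setoid.IsPartition P ∧ ∀ S ∈ P, T.IsHomCopyOn G S

/-- A `T`-decomposition: a partition of the edge set of `G` into copies isomorphic to `T`. -/
def IsoCopyDecomposition {VT ET : Type} (T : Multigraph VT ET) (G : Multigraph V E) : Prop :=
  ∃ P : Set (Set E), Setoid.IsPartition P ∧ ∀ S ∈ P, T.IsIsoCopyOn G S

/-- There is a walk of length `n` from `v` to `w` in `G`. -/
def WalkLen (G : Multigraph V E) (n : ℕ) (v w : V) : Prop :=
  ∃ (p : Fin (n + 1) → V) (e : Fin n → E), p 0 = v ∧ p (Fin.last n) = w ∧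
    ∀ i : Fin n, G.ends (e i) = s(p i.castSucc, p i.succ)

/-- Graph distance. -/
noncomputable def dist (G : Multigraph V E) (v w : V) : ℕ :=
  sInf {n | G.WalkLen n v w}

/-- Diameter of a finite graph. -/
noncomputable def diam (G : Multigraph V E) [Fintype V] : ℕ :=
  Finset.univ.sup fun p : V × V => G.dist p.1 p.2

/-- `G` contains a cycle of length `n`. -/
def HasCycleOfLength (G : Multigraph V E) (n : ℕ) : Prop :=
  2 ≤ n ∧ ∃ (v : ZMod n → V) (e : ZMod n → E), Function.Injective v ∧ Function.Injective e ∧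
    ∀ i, G.ends (e i) = s(v i, v (i + 1))

end Multigraph

/-!
If `f u = f v` for distinct vertices `u`, `v` of `T`, take a shortest `u`–`v` walk in `T`: it is a
path, of length at most `diam T`. Its image in `G` is a closed walk whose edges are distinct, since
the copy maps edges injectively, and a closed walk with distinct edges of positive length contains
a cycle no longer than itself, which the girth assumption forbids.
-/

namespace Multigraph

variable {V E : Type} {G : Multigraph V E} {n : ℕ} {p : ℕ → V} {e : ℕ → E}

/-- An `ℕ`-indexed version of `WalkLen`, free of `Fin` casts; entries beyond `n` are ignored. -/
def IsWalk (G : Multigraph V E) (n : ℕ) (p : ℕ → V) (e : ℕ → E) : Prop :=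
  ∀ i < n, G.ends (e i) = s(p i, p (i + 1))

theorem IsWalk.walkLen (hw : G.IsWalk n p e) : G.WalkLen n (p 0) (p n) :=
  ⟨fun i => p i, fun i => e i, by simp, rfl, fun i => hw i i.isLt⟩

/-- `0 < n` provides the default edge for the positions beyond `n`, as `E` may be empty. -/
theorem WalkLen.exists_isWalk {u v : V} (h : G.WalkLen n u v) (hn : 0 < n) :
    ∃ p e, G.IsWalk n p e ∧ p 0 = u ∧ p n = v := by
  obtain ⟨p, e, hp0, hpn, he⟩ := h
  refine ⟨fun i => p ⟨min i n, by omega⟩, fun i => e ⟨min i (n - 1), by omega⟩,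
    fun i hi => ?_, ?_, ?_⟩
  · simpa [min_eq_left hi.le, min_eq_left (Nat.succ_le_of_lt hi),
      min_eq_left (Nat.le_sub_one_of_lt hi)] using he ⟨i, hi⟩
  · simpa using hp0
  · convert hpn
    simp

theorem WalkLen.pos_of_ne {u v : V} (h : G.WalkLen n u v) (huv : u ≠ v) : 0 < n := by
  obtain ⟨p, -, rfl, rfl, -⟩ := h
  rcases n with - | n
  · exact absurd rfl huv
  · omega

theorem WalkLen.snoc {u w x : V} {e : E} (h : G.WalkLen n u w) (he : G.ends e = s(w, x)) :
    G.WalkLen (n + 1) u x := by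
  obtain ⟨p, es, hp0, hpn, hes⟩ := h
  refine ⟨Fin.snoc p x, Fin.snoc es e, by simpa using hp0, by simp, fun i => ?_⟩
  induction i using Fin.lastCases with
  | last => simpa [hpn] using he
  | cast i => simpa only [← Fin.castSucc_succ, Fin.snoc_castSucc] using hes i

theorem Connected.walkLen_dist (hG : G.Connected) (u v : V) : G.WalkLen (G.dist u v) u v := by
  have hreach := hG u v
  suffices ∃ n, G.WalkLen n u v from Nat.sInf_mem this
  induction hreach with
  | refl => exact ⟨0, fun _ => u, Fin.elim0, rfl, rfl, fun i => i.elim0⟩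
  | tail _ hadj ih =>
    obtain ⟨n, hw⟩ := ih
    obtain ⟨e, -, he⟩ := hadj
    exact ⟨n + 1, hw.snoc he⟩

theorem dist_le_diam [Fintype V] (G : Multigraph V E) (u v : V) : G.dist u v ≤ G.diam :=
  Finset.le_sup (f := fun p : V × V => G.dist p.1 p.2) (Finset.mem_univ (u, v))

theorem IsWalk.shift {a m : ℕ} (hw : G.IsWalk n p e) (h : a + m ≤ n) :
    G.IsWalk m (fun k => p (a + k)) (fun k => e (a + k)) := fun k hk => by
  simpa only [Nat.add_assoc] using hw (a + k) (by omega)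

theorem IsWalk.map {VT ET : Type} {T : Multigraph VT ET} {f : VT → V} {g : ET → E}
    (hends : ∀ e, G.ends (g e) = (T.ends e).map f) {p : ℕ → VT} {e : ℕ → ET}
    (hw : T.IsWalk n p e) : G.IsWalk n (f ∘ p) (g ∘ e) := fun i hi => by
  simp [hends, hw i hi]

theorem IsWalk.walkLen_shortcut {a b : ℕ} (hw : G.IsWalk n p e) (hab : a < b) (hbn : b ≤ n)
    (hpab : p a = p b) : G.WalkLen (n - (b - a)) (p 0) (p n) := by
  have hw' : G.IsWalk (n - (b - a)) (fun k => if k ≤ a then p k else p (k + (b - a)))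
      (fun k => if k < a then e k else e (k + (b - a))) := by
    intro k hk
    dsimp only
    rcases lt_trichotomy k a with hka | rfl | hka
    · rw [if_pos hka, if_pos hka.le, if_pos (Nat.succ_le_of_lt hka)]
      exact hw k (by omega)
    · rw [if_neg (lt_irrefl k), if_pos le_rfl, if_neg (by omega), Nat.add_sub_cancel' hab.le,
        Nat.add_right_comm, Nat.add_sub_cancel' hab.le, hpab]
      exact hw b (by omega)
    · rw [if_neg (by omega), if_neg (by omega), if_neg (by omega), Nat.add_right_comm k 1]
      exact hw _ (by omega)
  convert hw'.walkLen using 1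
  · simp
  · split_ifs with h
    · rw [show n - (b - a) = a by omega, hpab, show b = n by omega]
    · rw [Nat.sub_add_cancel (by omega)]

theorem IsWalk.injOn_of_le_dist (hw : G.IsWalk n p e) (hn : n ≤ G.dist (p 0) (p n)) :
    Set.InjOn p (Set.Iic n) := by
  suffices ∀ a b, a < b → b ≤ n → p a ≠ p b by
    intro a ha b hb hab
    by_contra hne
    rcases Nat.lt_or_gt_of_ne hne with h | h
    exacts [this a b h hb hab, this b a h ha hab.symm]
  intro a b hab hbn hpab
  have : G.dist (p 0) (p n) ≤ n - (b - a) := Nat.sInf_le (hw.walkLen_shortcut hab hbn hpab)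
  omega

theorem IsWalk.injOn_edges (hw : G.IsWalk n p e) (hp : Set.InjOn p (Set.Iic n)) :
    Set.InjOn e (Set.Iio n) := by
  intro a (ha : a < n) b (hb : b < n) hab
  have hends : s(p a, p (a + 1)) = s(p b, p (b + 1)) := by rw [← hw a ha, ← hw b hb, hab]
  have hp' : ∀ i j, i ≤ n → j ≤ n → p i = p j → i = j := fun i j hi hj => hp hi hj
  rcases Sym2.eq_iff.mp hends with ⟨h, -⟩ | ⟨h₁, h₂⟩
  · exact hp' a b (by omega) (by omega) h
  · have := hp' a (b + 1) (by omega) (by omega) h₁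
    have := hp' (a + 1) b (by omega) (by omega) h₂
    omega

theorem IsWalk.hasCycleOfLength {m : ℕ} (hw : G.IsWalk m p e) (hm : 2 ≤ m)
    (hp : Set.InjOn p (Set.Iio m)) (he : Set.InjOn e (Set.Iio m)) (hclosed : p m = p 0) :
    G.HasCycleOfLength m := by
  have : NeZero m := ⟨by omega⟩
  have : Fact (1 < m) := ⟨by omega⟩
  refine ⟨hm, fun k => p k.val, fun k => e k.val,
    fun a b h => ZMod.val_injective m (hp (ZMod.val_lt a) (ZMod.val_lt b) h),
    fun a b h => ZMod.val_injective m (he (ZMod.val_lt a) (ZMod.val_lt b) h), fun k => ?_⟩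
  dsimp only
  rw [hw k.val (ZMod.val_lt k), ZMod.val_add, ZMod.val_one]
  rcases (show k.val + 1 ≤ m from ZMod.val_lt k).lt_or_eq with h | h
  · rw [Nat.mod_eq_of_lt h]
  · rw [h, Nat.mod_self, hclosed]

theorem IsWalk.exists_hasCycleOfLength (hw : G.IsWalk n p e) (hn : 0 < n)
    (he : Set.InjOn e (Set.Iio n)) (hclosed : p n = p 0) : ∃ m ≤ n, G.HasCycleOfLength m := by
  induction n using Nat.strong_induction_on generalizing p e with
  | _ n ih =>
  by_cases hp : Set.InjOn p (Set.Iio n)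
  · refine ⟨n, le_rfl, hw.hasCycleOfLength ?_ hp he hclosed⟩
    by_contra! h
    obtain rfl : n = 1 := by omega
    exact G.loopless (e 0) (by simp [hw 0 one_pos, hclosed])
  · obtain ⟨a, b, hab, hbn, hpab⟩ : ∃ a b, a < b ∧ b < n ∧ p a = p b := by
      simp only [Set.InjOn, Set.mem_Iio, not_forall] at hp
      obtain ⟨a, ha, b, hb, hpab, hne⟩ := hp
      rcases Nat.lt_or_gt_of_ne hne with h | h
      exacts [⟨a, b, h, hb, hpab⟩, ⟨b, a, h, ha, hpab.symm⟩]
    have he' : Set.InjOn (fun k => e (a + k)) (Set.Iio (b - a)) :=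
      he.comp (add_right_injective a).injOn fun k (hk : k < b - a) => show a + k < n by omega
    obtain ⟨m, hm, hcyc⟩ := ih (b - a) (by omega) (hw.shift (by omega)) (by omega) he'
      (by simp [Nat.add_sub_cancel' hab.le, hpab])
    exact ⟨m, by omega, hcyc⟩

theorem Connected.injective_of_diam_lt_girth {VT ET : Type} [Fintype VT] {T : Multigraph VT ET}
    (hT : T.Connected) {f : VT → V} {g : ET → E} (hg : Function.Injective g)
    (hends : ∀ e, G.ends (g e) = (T.ends e).map f)
    (hgirth : ∀ n ≤ T.diam, ¬ G.HasCycleOfLength n) : Function.Injective f := by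
  intro u v huv
  by_contra hne
  have hwalk := hT.walkLen_dist u v
  have hpos := hwalk.pos_of_ne hne
  obtain ⟨p, e, hw, hp0, hpn⟩ := hwalk.exists_isWalk hpos
  have hpath : Set.InjOn p (Set.Iic (T.dist u v)) := hw.injOn_of_le_dist (by rw [hp0, hpn])
  obtain ⟨m, hm, hcyc⟩ := (hw.map hends).exists_hasCycleOfLength hpos
    (hg.injOn.comp (hw.injOn_edges hpath) (Set.mapsTo_univ _ _)) (by simp [hp0, hpn, huv])
  exact hgirth m (hm.trans (T.dist_le_diam u v)) hcyc

end Multigraph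

open Multigraph in
theorem homCopies_are_isoCopies_of_large_girth_general {VT ET V E : Type} [Fintype VT]
    (T : Multigraph VT ET) (G : Multigraph V E) (d : ℕ)
    (hT : T.IsTree) (hd : T.diam = d)
    (hgirth : ∀ n, n ≤ d → ¬ G.HasCycleOfLength n) :
    (∀ (S : Set E) (f : VT → V) (g : ET ≃ S),
        (∀ e, G.ends (g e) = (T.ends e).map f) → Function.Injective f) ∧
    (∀ P : Set (Set E), Setoid.IsPartition P →
        (∀ S ∈ P, T.IsHomCopyOn G S) → ∀ S ∈ P, T.IsIsoCopyOn G S) := by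
  subst hd
  have hinj : ∀ (S : Set E) (f : VT → V) (g : ET ≃ S),
      (∀ e, G.ends (g e) = (T.ends e).map f) → Function.Injective f := fun S f g hends =>
    hT.1.injective_of_diam_lt_girth (Subtype.val_injective.comp g.injective) hends hgirth
  refine ⟨hinj, fun P _ hcopies S hS => ?_⟩
  obtain ⟨f, g, hends⟩ := hcopies S hS
  exact ⟨f, g, hinj S f g hends, hends⟩

open Multigraph in
/-- if `T` is a tree of diameter `d` and `G` has girth greater than `d`,
then every subgraph of `G` which is a homomorphic copy of `T` is isomorphic to `T`, and
consequently every `T*`-decomposition of `G` is a `T`-decomposition. -/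
theorem homCopies_are_isoCopies_of_large_girth {VT ET V E : Type} [Fintype VT] [Fintype ET]
    (T : Multigraph VT ET) (G : Multigraph V E) (d : ℕ)
    (hT : T.IsTree) (hd : T.diam = d)
    (hgirth : ∀ n, n ≤ d → ¬ G.HasCycleOfLength n) :
    (∀ (S : Set E) (f : VT → V) (g : ET ≃ S),
        (∀ e, G.ends (g e) = (T.ends e).map f) → Function.Injective f) ∧
    (∀ P : Set (Set E), Setoid.IsPartition P →
        (∀ S ∈ P, T.IsHomCopyOn G S) → ∀ S ∈ P, T.IsIsoCopyOn G S) :=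
  homCopies_are_isoCopies_of_large_girth_general T G d hT hd hgirth
end

section
/- Let T be a tree with m edges, with proper 2-colouring classes T_A and T_B where T_B contains a leaf, and with edges coloured bijectively by {1,…,m}. Let G be a bipartite graph on vertex classes A and B. If G admits a T-equitable edge-colouring with colours 1,…,m, then G has a T*-decomposition. -/
theorem Sym2.eq_left_of_mem_of_disjoint {α : Type*} {A B : Set α} (hAB : Disjoint A B)
    {v x y : α} (hv : v ∈ A) (hy : y ∈ B) (h : v ∈ s(x, y)) : v = x := by
  rcases Sym2.mem_iff.1 h with rfl | rfl
  · rfl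
  · exact absurd hy (Set.disjoint_left.1 hAB hv)

def Equiv.insertFiber {I C E : Type*} [DecidableEq C] (c : E → C) (j₀ : C)
    (μ : I ≃ {e // c e = j₀}) (ψ : I × {j // j ≠ j₀} ≃ {e // c e ≠ j₀}) : I × C ≃ E where
  toFun p := if h : p.2 = j₀ then μ p.1 else ψ (p.1, ⟨p.2, h⟩)
  invFun e :=
    if h : c e = j₀ then (μ.symm ⟨e, h⟩, j₀) else ((ψ.symm ⟨e, h⟩).1, (ψ.symm ⟨e, h⟩).2)
  left_inv := by
    rintro ⟨i, j⟩
    by_cases h : j = j₀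
    · subst h
      simp [(μ i).2]
    · simp [h, (ψ (i, ⟨j, h⟩)).2]
  right_inv e := by
    by_cases h : c e = j₀
    · simp [h]
    · simp [h, (ψ.symm ⟨e, h⟩).2.2]

section
variable {I C E : Type*} [DecidableEq C] {c : E → C} {j₀ : C} (μ : I ≃ {e // c e = j₀})
  (ψ : I × {j // j ≠ j₀} ≃ {e // c e ≠ j₀})

theorem Equiv.insertFiber_apply_self (i : I) : Equiv.insertFiber c j₀ μ ψ (i, j₀) = μ i :=
  dif_pos rfl

theorem Equiv.insertFiber_apply_of_ne (i : I) {j : C} (h : j ≠ j₀) :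
    Equiv.insertFiber c j₀ μ ψ (i, j) = ψ (i, ⟨j, h⟩) :=
  dif_neg h

end

theorem exists_equiv_forall_apply_eq_of_card_fiber_eq {α β γ : Type*} [Finite α] [Finite β]
    {f : α → γ} {g : β → γ} (h : ∀ x, Nat.card {a // f a = x} = Nat.card {b // g b = x}) :
    ∃ μ : α ≃ β, ∀ a, g (μ a) = f a :=
  ⟨Equiv.ofFiberEquiv fun x => (Finite.card_eq.1 (h x)).some, Equiv.ofFiberEquiv_map _⟩

theorem Nat.card_subtype_ne_add_one {α : Type*} [Finite α] (a : α) :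
    Nat.card {x // x ≠ a} + 1 = Nat.card α := by
  classical
  rw [← Finite.card_option, Nat.card_congr (Equiv.optionSubtypeNe a)]

namespace Multigraph

variable {V E VT ET : Type}

section Bipartition

variable {G : Multigraph V E} {A B : Set V}

theorem IsBipartition.symm (h : G.IsBipartition A B) : G.IsBipartition B A := by
  obtain ⟨hAB, hcover, hends⟩ := h
  refine ⟨hAB.symm, Set.union_comm A B ▸ hcover, fun e => ?_⟩
  obtain ⟨a, ha, b, hb, he⟩ := hends e
  exact ⟨b, hb, a, ha, he.trans Sym2.eq_swap⟩

theorem IsBipartition.exists_ends_eq (h : G.IsBipartition A B) {a : V} {e : E} (ha : a ∈ A)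
    (hae : a ∈ G.ends e) : ∃ b ∈ B, G.ends e = s(a, b) := by
  obtain ⟨a', -, b, hb, he⟩ := h.2.2 e
  rw [he] at hae ⊢
  obtain rfl := Sym2.eq_left_of_mem_of_disjoint h.1 ha hb hae
  exact ⟨b, hb, rfl⟩

theorem IsBipartition.comap {V' E' : Type} {H : Multigraph V' E'} (h : G.IsBipartition A B)
    (f : V' → V) (g : E' → E) (hfg : ∀ e, (H.ends e).map f = G.ends (g e)) :
    H.IsBipartition (f ⁻¹' A) (f ⁻¹' B) := by
  refine ⟨h.1.preimage f, by rw [← Set.preimage_union, h.2.1, Set.preimage_univ], fun e => ?_⟩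
  obtain ⟨a, ha, b, hb, he⟩ := h.2.2 (g e)
  have key := hfg e
  rw [he] at key
  generalize H.ends e = z at key ⊢
  induction z using Sym2.ind with | h x y => ?_
  rw [Sym2.map_mk, Sym2.eq_iff] at key
  rcases key with ⟨rfl, rfl⟩ | ⟨rfl, rfl⟩
  · exact ⟨x, ha, y, hb, rfl⟩
  · exact ⟨y, ha, x, hb, Sym2.eq_swap⟩

end Bipartition

section Degrees

open Finset

theorem sum_deg_eq_two_mul_card [Fintype V] [Fintype E] (G : Multigraph V E) :
    ∑ v, G.deg v = 2 * Fintype.card E := by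
  classical
  have hdeg (v : V) : G.deg v = #(univ.bipartiteAbove (fun v e => v ∈ G.ends e) v) := by
    rw [deg, Nat.card_eq_fintype_card, Fintype.card_subtype]
    rfl
  have hends (e : E) : #(univ.bipartiteBelow (fun v e => v ∈ G.ends e) e) = 2 := by
    rw [← Sym2.card_toFinset_of_not_isDiag _ (G.loopless e)]
    congr 1
    ext
    simp [bipartiteBelow, Sym2.mem_toFinset]
  simp_rw [hdeg, sum_card_bipartiteAbove_eq_sum_card_bipartiteBelow, hends, sum_const, card_univ,
    smul_eq_mul, mul_comm]

theorem Connected.deg_pos [Finite E] {G : Multigraph V E} (hG : G.Connected) {v w : V}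
    (hvw : v ≠ w) : 0 < G.deg v := by
  rcases (hG v w).cases_head with h | ⟨x, ⟨e, -, he⟩, -⟩
  · exact absurd h hvw
  · exact Finite.card_pos_iff.2 ⟨⟨e, he ▸ Sym2.mem_mk_left v x⟩⟩

theorem IsTree.deg_pos [Finite V] [Finite E] [Nonempty E] {T : Multigraph V E} (hT : T.IsTree)
    (v : V) : 0 < T.deg v := by
  have : Nontrivial V := Finite.one_lt_card_iff_nontrivial.1 <| by
    have := hT.2
    have : 0 < Nat.card E := Finite.card_pos
    omega
  obtain ⟨w, hw⟩ := exists_ne v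
  exact hT.1.deg_pos hw.symm

theorem IsTree.exists_deg_eq_one [Finite V] [Finite E] [Nonempty E] {T : Multigraph V E}
    (hT : T.IsTree) : ∃ t, T.deg t = 1 := by
  cases nonempty_fintype V
  cases nonempty_fintype E
  by_contra! h
  have hge (v : V) : 2 ≤ T.deg v := by
    have := hT.deg_pos v
    have := h v
    omega
  have := Finset.sum_le_sum fun v (_ : v ∈ univ) => hge v
  have hcard := hT.2
  rw [Nat.card_eq_fintype_card, Nat.card_eq_fintype_card] at hcard
  simp only [sum_deg_eq_two_mul_card, sum_const, card_univ, smul_eq_mul] at this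
  omega

theorem exists_forall_mem_ends_iff_of_deg_eq_one {G : Multigraph V E} {v : V} (h : G.deg v = 1) :
    ∃ e, ∀ e', v ∈ G.ends e' ↔ e' = e := by
  obtain ⟨⟨e, he⟩, huniq⟩ := Nat.card_eq_one_iff_exists.1 h
  exact ⟨e, fun e' => ⟨fun he' => congrArg Subtype.val (huniq ⟨e', he'⟩), fun h => h ▸ he⟩⟩

end Degrees

section DeleteLeaf

def retractNe {α : Type*} [DecidableEq α] {a b : α} (hb : b ≠ a) (x : α) : {x // x ≠ a} :=
  if h : x = a then ⟨b, hb⟩ else ⟨x, h⟩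

section
variable {α : Type*} [DecidableEq α] {a b : α} (hb : b ≠ a)

theorem retractNe_self : retractNe hb a = ⟨b, hb⟩ := dif_pos rfl

theorem retractNe_of_ne {x : α} (h : x ≠ a) : retractNe hb x = ⟨x, h⟩ := dif_neg h

theorem retractNe_val (x : {x // x ≠ a}) : retractNe hb x = x := retractNe_of_ne hb x.2

end

theorem map_val_map_retractNe {α : Type*} [DecidableEq α] {a b : α} (hb : b ≠ a) {z : Sym2 α}
    (ha : a ∉ z) : (z.map (retractNe hb)).map Subtype.val = z := by
  rw [Sym2.map_map]
  refine (Sym2.map_congr fun x hx => ?_).trans (congrFun Sym2.map_id z)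
  rw [Function.comp_apply, retractNe_of_ne hb fun h => ha (h ▸ hx)]
  rfl

open Classical in
noncomputable def deleteLeaf (T : Multigraph VT ET) {t₀ s : VT} (hs : s ≠ t₀) {j₀ : ET}
    (hj₀ : ∀ j, t₀ ∈ T.ends j → j = j₀) : Multigraph {t // t ≠ t₀} {j // j ≠ j₀} where
  ends j := (T.ends j).map (retractNe hs)
  loopless j hdiag := T.loopless j <| by
    simpa only [map_val_map_retractNe hs fun h => j.2 (hj₀ j h)] using
      hdiag.map (f := Subtype.val)

variable {T : Multigraph VT ET} {t₀ s : VT} (hs : s ≠ t₀) {j₀ : ET}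
  (hj₀ : ∀ j, t₀ ∈ T.ends j → j = j₀)

theorem map_val_ends_deleteLeaf (j : {j // j ≠ j₀}) :
    ((T.deleteLeaf hs hj₀).ends j).map Subtype.val = T.ends j := by
  classical
  exact map_val_map_retractNe hs fun h => j.2 (hj₀ j h)

theorem mem_ends_deleteLeaf {t : {t // t ≠ t₀}} {j : {j // j ≠ j₀}} :
    t ∈ (T.deleteLeaf hs hj₀).ends j ↔ t.1 ∈ T.ends j := by
  rw [← map_val_ends_deleteLeaf hs hj₀, Sym2.mem_map]
  exact ⟨fun h => ⟨t, h, rfl⟩, fun ⟨u, hu, hut⟩ => Subtype.ext hut ▸ hu⟩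

theorem IsBipartition.deleteLeaf {TA TB : Set VT} (hTbip : T.IsBipartition TA TB) :
    (T.deleteLeaf hs hj₀).IsBipartition (Subtype.val ⁻¹' TA) (Subtype.val ⁻¹' TB) :=
  hTbip.comap Subtype.val Subtype.val (map_val_ends_deleteLeaf hs hj₀)

theorem Connected.deleteLeaf (hT : T.Connected) (hj₀s : T.ends j₀ = s(t₀, s)) :
    (T.deleteLeaf hs hj₀).Connected := by
  classical
  -- `retractNe hs` maps walks of `T` to walks of the deleted tree, collapsing the edge `j₀`.
  have hstep (x y : VT) (hxy : T.Adj Set.univ x y) :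
      Relation.ReflTransGen ((T.deleteLeaf hs hj₀).Adj Set.univ) (retractNe hs x)
        (retractNe hs y) := by
    obtain ⟨j, -, hj⟩ := hxy
    by_cases hjj₀ : j = j₀
    · have hr : retractNe hs t₀ = retractNe hs s := by
        rw [retractNe_self, retractNe_of_ne hs hs]
      rw [hjj₀, hj₀s, Sym2.eq_iff] at hj
      rcases hj with ⟨rfl, rfl⟩ | ⟨rfl, rfl⟩ <;> rw [hr]
    · refine .single ⟨⟨j, hjj₀⟩, trivial, ?_⟩
      simp only [Multigraph.deleteLeaf, hj, Sym2.map_mk]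
  intro v w
  simpa only [Function.onFun, retractNe_val] using
    Relation.ReflTransGen.lift' (retractNe hs) hstep _ _ (hT v w)

theorem IsTree.deleteLeaf [Finite VT] [Finite ET] (hT : T.IsTree)
    (hj₀s : T.ends j₀ = s(t₀, s)) : (T.deleteLeaf hs hj₀).IsTree := by
  refine ⟨hT.1.deleteLeaf hs hj₀ hj₀s, ?_⟩
  have := hT.2
  rw [← Nat.card_subtype_ne_add_one j₀, ← Nat.card_subtype_ne_add_one t₀] at this
  omega

end DeleteLeaf

def restrict (G : Multigraph V E) (p : E → Prop) : Multigraph V {e // p e} where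
  ends e := G.ends e
  loopless e := G.loopless e

theorem IsBipartition.restrict {G : Multigraph V E} {A B : Set V} (hGbip : G.IsBipartition A B)
    (p : E → Prop) : (G.restrict p).IsBipartition A B :=
  ⟨hGbip.1, hGbip.2.1, fun e => hGbip.2.2 e⟩

theorem degCol_restrict {C : Type} (G : Multigraph V E) (c : E → C) (p : C → Prop)
    (j : Subtype p) (v : V) :
    (G.restrict fun e => p (c e)).degCol (Subtype.map c fun _ h => h) j v = G.degCol c j v :=
  Nat.card_congr <| (Equiv.subtypeEquivRight fun e => by simp [Subtype.ext_iff, restrict]).trans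
    (Equiv.subtypeSubtypeEquivSubtype fun h => h.1 ▸ j.2)

def IsEquitableOn (T : Multigraph VT ET) (TA : Set VT) (G : Multigraph V E) (A : Set V)
    (c : E → ET) : Prop :=
  ∀ v ∈ A, ∀ t ∈ TA, ∀ j k : ET, t ∈ T.ends j → t ∈ T.ends k → G.degCol c j v = G.degCol c k v

theorem IsEquitableOn.deleteLeaf {T : Multigraph VT ET} {TA : Set VT} {G : Multigraph V E}
    {A : Set V} {c : E → ET} {t₀ s : VT} (hs : s ≠ t₀) {j₀ : ET}
    (hj₀ : ∀ j, t₀ ∈ T.ends j → j = j₀) (h : IsEquitableOn T TA G A c) :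
    IsEquitableOn (T.deleteLeaf hs hj₀) (Subtype.val ⁻¹' TA) (G.restrict fun e => c e ≠ j₀) A
      (Subtype.map c fun _ h => h) := by
  intro v hv t ht j k hj hk
  rw [degCol_restrict G c (· ≠ j₀), degCol_restrict G c (· ≠ j₀)]
  exact h v hv t ht j k ((mem_ends_deleteLeaf hs hj₀).1 hj) ((mem_ends_deleteLeaf hs hj₀).1 hk)

/-- A decomposition of `G` into homomorphic copies of `T` indexed by `I`, where copy `i` maps
`TA` into `A` and `TB` into `B` and uses an edge of colour `j` as the image of the edge `j`. -/
structure ColourDecomposition (T : Multigraph VT ET) (TA TB : Set VT) (G : Multigraph V E)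
    (A B : Set V) (c : E → ET) (I : Type) where
  edge : I × ET ≃ E
  vert : I → VT → V
  colour_edge : ∀ i j, c (edge (i, j)) = j
  ends_edge : ∀ i j, G.ends (edge (i, j)) = (T.ends j).map (vert i)
  mapsTo_left : ∀ i, Set.MapsTo (vert i) TA A
  mapsTo_right : ∀ i, Set.MapsTo (vert i) TB B

namespace ColourDecomposition

variable {T : Multigraph VT ET} {TA TB : Set VT} {G : Multigraph V E} {A B : Set V} {c : E → ET}
  {I : Type} (D : ColourDecomposition T TA TB G A B c I)

def swap : ColourDecomposition T TB TA G B A c I :=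
  { D with mapsTo_left := D.mapsTo_right, mapsTo_right := D.mapsTo_left }

theorem snd_edge_symm (e : E) : (D.edge.symm e).2 = c e := by
  simpa using (D.colour_edge (D.edge.symm e).1 (D.edge.symm e).2).symm

theorem edge_fst_edge_symm {e : E} {j : ET} (h : c e = j) :
    D.edge ((D.edge.symm e).1, j) = e := by
  rw [← h, ← D.snd_edge_symm]
  exact D.edge.apply_symm_apply e

theorem finite [Finite E] (D : ColourDecomposition T TA TB G A B c I) (j : ET) : Finite I :=
  Finite.of_injective (fun i => D.edge (i, j)) fun _ _ h => by simpa using h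

theorem vert_eq_iff_mem_ends (hTbip : T.IsBipartition TA TB) (hGbip : G.IsBipartition A B)
    {a : VT} (ha : a ∈ TA) {j : ET} (haj : a ∈ T.ends j) {v : V} (hv : v ∈ A) (i : I) :
    D.vert i a = v ↔ v ∈ G.ends (D.edge (i, j)) := by
  obtain ⟨b, hb, hj⟩ := hTbip.exists_ends_eq ha haj
  rw [D.ends_edge, hj, Sym2.map_mk]
  exact ⟨fun h => h ▸ Sym2.mem_mk_left _ _,
    fun h => (Sym2.eq_left_of_mem_of_disjoint hGbip.1 hv (D.mapsTo_right i hb) h).symm⟩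

theorem card_vert_eq_degCol (hTbip : T.IsBipartition TA TB) (hGbip : G.IsBipartition A B)
    {a : VT} (ha : a ∈ TA) {j : ET} (haj : a ∈ T.ends j) {v : V} (hv : v ∈ A) :
    Nat.card {i // D.vert i a = v} = G.degCol c j v :=
  Nat.card_congr
    { toFun i := ⟨D.edge (i, j), D.colour_edge _ _,
        (D.vert_eq_iff_mem_ends hTbip hGbip ha haj hv i).1 i.2⟩
      invFun e := ⟨(D.edge.symm e).1, (D.vert_eq_iff_mem_ends hTbip hGbip ha haj hv _).2 <| by
        rw [D.edge_fst_edge_symm e.2.1]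
        exact e.2.2⟩
      left_inv i := by simp
      right_inv e := by
        ext
        exact D.edge_fst_edge_symm e.2.1 }

theorem homCopyDecomposition (D : ColourDecomposition T TA TB G A B c I) :
    T.HomCopyDecomposition G := by
  refine ⟨(Setoid.ker fun e => (D.edge.symm e).1).classes, Setoid.isPartition_classes _, ?_⟩
  rintro _ ⟨e, rfl⟩
  refine ⟨D.vert (D.edge.symm e).1,
    { toFun j := ⟨D.edge ((D.edge.symm e).1, j), by simp [Setoid.ker_def]⟩
      invFun x := (D.edge.symm x).2
      left_inv j := by simp
      right_inv x := by
        ext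
        have hx : (D.edge.symm x).1 = (D.edge.symm e).1 := x.2
        simp [← hx] }, fun j => D.ends_edge _ _⟩

end ColourDecomposition

theorem nonempty_colourDecomposition_of_isEmpty [IsEmpty ET] {T : Multigraph VT ET}
    {TA TB : Set VT} {G : Multigraph V E} {A B : Set V} (c : E → ET) :
    Nonempty (ColourDecomposition T TA TB G A B c Empty) :=
  have : IsEmpty E := c.isEmpty
  ⟨{ edge := Equiv.equivOfIsEmpty _ _
     vert := Empty.elim
     colour_edge := fun i => i.elim
     ends_edge := fun i => i.elim
     mapsTo_left := fun i => i.elim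
     mapsTo_right := fun i => i.elim }⟩

theorem nonempty_colourDecomposition_of_unique [Unique ET] {T : Multigraph VT ET}
    {TA TB : Set VT} {G : Multigraph V E} {A B : Set V} (hTbip : T.IsBipartition TA TB)
    (hGbip : G.IsBipartition A B) (c : E → ET) :
    Nonempty (ColourDecomposition T TA TB G A B c E) := by
  classical
  choose a ha b hb hab using hGbip.2.2
  obtain ⟨x, hx, y, hy, hxy⟩ := hTbip.2.2 default
  have hyA : y ∉ TA := Set.disjoint_right.1 hTbip.1 hy
  exact ⟨{
    edge := Equiv.prodUnique E ET
    vert := fun e t => if t ∈ TA then a e else b e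
    colour_edge := fun _ _ => Subsingleton.elim _ _
    ends_edge := fun e j => by simp [Unique.eq_default j, hxy, hx, hyA, hab]
    mapsTo_left := fun e t ht => by simp [ht, ha]
    mapsTo_right := fun e t ht => by simp [Set.disjoint_right.1 hTbip.1 ht, hb] }⟩

namespace ColourDecomposition

variable [Finite E] {T : Multigraph VT ET} {TA TB : Set VT} {G : Multigraph V E} {A B : Set V}
  {c : E → ET} {t₀ s : VT} {hs : s ≠ t₀} {j₀ : ET} {hj₀ : ∀ j, t₀ ∈ T.ends j → j = j₀} {I : Type}

/-- Equitability at `s` lets the `j₀`-coloured edges be matched with the copies through their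
ends in `A`: both sides have `degCol c j₀ v = degCol c j₁ v` members over each `v ∈ A`. -/
theorem exists_equiv_leafEdges
    (D : ColourDecomposition (T.deleteLeaf hs hj₀) (Subtype.val ⁻¹' TA) (Subtype.val ⁻¹' TB)
      (G.restrict fun e => c e ≠ j₀) A B (Subtype.map c fun _ h => h) I)
    (hTbip : T.IsBipartition TA TB) (hGbip : G.IsBipartition A B)
    (hA : IsEquitableOn T TA G A c) (hsA : s ∈ TA) (hj₀s : T.ends j₀ = s(t₀, s))
    {j₁ : {j // j ≠ j₀}} (hsj₁ : ⟨s, hs⟩ ∈ (T.deleteLeaf hs hj₀).ends j₁) :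
    ∃ μ : I ≃ {e // c e = j₀}, ∀ i, ∃ b ∈ B, G.ends (μ i) = s(b, D.vert i ⟨s, hs⟩) := by
  choose a ha b hb hab using fun e : {e // c e = j₀} => hGbip.2.2 e.1
  have hcard (v : V) : Nat.card {i // D.vert i ⟨s, hs⟩ = v} = Nat.card {e // a e = v} := by
    by_cases hv : v ∈ A
    · have hmem (e : {e // c e = j₀}) : v ∈ G.ends e ↔ a e = v := by
        rw [hab]
        exact ⟨fun h => (Sym2.eq_left_of_mem_of_disjoint hGbip.1 hv (hb e) h).symm,
          fun h => h ▸ Sym2.mem_mk_left _ _⟩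
      calc Nat.card {i // D.vert i ⟨s, hs⟩ = v}
          = G.degCol c j₁ v := by
            rw [D.card_vert_eq_degCol (hTbip.deleteLeaf hs hj₀) (hGbip.restrict _) hsA hsj₁ hv,
              degCol_restrict G c (· ≠ j₀)]
        _ = G.degCol c j₀ v := hA v hv s hsA _ _ ((mem_ends_deleteLeaf hs hj₀).1 hsj₁)
            (hj₀s ▸ Sym2.mem_mk_right _ _)
        _ = Nat.card {e // a e = v} := Nat.card_congr <|
            (Equiv.subtypeSubtypeEquivSubtypeInter _ _).symm.trans (Equiv.subtypeEquivRight hmem)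
    · have : IsEmpty {i // D.vert i ⟨s, hs⟩ = v} := ⟨fun i => hv (i.2 ▸ D.mapsTo_left i.1 hsA)⟩
      have : IsEmpty {e // a e = v} := ⟨fun e => hv (e.2 ▸ ha e.1)⟩
      simp only [Nat.card_of_isEmpty]
  have : Finite I := D.finite j₁
  obtain ⟨μ, hμ⟩ := exists_equiv_forall_apply_eq_of_card_fiber_eq hcard
  exact ⟨μ, fun i => ⟨b (μ i), hb _, by rw [hab, hμ, Sym2.eq_swap]⟩⟩

theorem nonempty_of_deleteLeaf
    (D : ColourDecomposition (T.deleteLeaf hs hj₀) (Subtype.val ⁻¹' TA) (Subtype.val ⁻¹' TB)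
      (G.restrict fun e => c e ≠ j₀) A B (Subtype.map c fun _ h => h) I)
    (hTbip : T.IsBipartition TA TB) (hGbip : G.IsBipartition A B)
    (hA : IsEquitableOn T TA G A c) (ht₀ : t₀ ∈ TB) (hsA : s ∈ TA)
    (hj₀s : T.ends j₀ = s(t₀, s)) {j₁ : {j // j ≠ j₀}}
    (hsj₁ : ⟨s, hs⟩ ∈ (T.deleteLeaf hs hj₀).ends j₁) :
    Nonempty (ColourDecomposition T TA TB G A B c I) := by
  classical
  obtain ⟨μ, hμ⟩ := D.exists_equiv_leafEdges hTbip hGbip hA hsA hj₀s hsj₁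
  choose b hb hμb using hμ
  have hvert (i : I) (t : {t // t ≠ t₀}) :
      (fun t => if h : t = t₀ then b i else D.vert i ⟨t, h⟩) t.1 = D.vert i t :=
    dif_neg t.2
  refine ⟨{
    edge := Equiv.insertFiber c j₀ μ D.edge
    vert := fun i t => if h : t = t₀ then b i else D.vert i ⟨t, h⟩
    colour_edge := fun i j => ?_
    ends_edge := fun i j => ?_
    mapsTo_left := fun i t ht => ?_
    mapsTo_right := fun i t ht => ?_ }⟩
  · by_cases hj : j = j₀
    · rw [hj, Equiv.insertFiber_apply_self]
      exact (μ i).2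
    · rw [Equiv.insertFiber_apply_of_ne _ _ _ hj]
      exact congrArg Subtype.val (D.colour_edge i ⟨j, hj⟩)
  · by_cases hj : j = j₀
    · rw [hj, Equiv.insertFiber_apply_self, hμb, hj₀s, Sym2.map_mk, dif_pos rfl, dif_neg hs]
    · rw [Equiv.insertFiber_apply_of_ne _ _ _ hj, ← map_val_ends_deleteLeaf hs hj₀ ⟨j, hj⟩,
        Sym2.map_map]
      exact (D.ends_edge i ⟨j, hj⟩).trans (Sym2.map_congr fun t _ => (hvert i t).symm)
  · have ht' : t ≠ t₀ := fun h => Set.disjoint_left.1 hTbip.1 ht (h ▸ ht₀)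
    simpa only [dif_neg ht'] using
      D.mapsTo_left i (show (⟨t, ht'⟩ : {t // t ≠ t₀}).1 ∈ TA from ht)
  · by_cases ht' : t = t₀
    · simpa only [dif_pos ht'] using hb i
    · simpa only [dif_neg ht'] using
        D.mapsTo_right i (show (⟨t, ht'⟩ : {t // t ≠ t₀}).1 ∈ TB from ht)

end ColourDecomposition

theorem exists_colourDecomposition [Finite VT] [Finite ET] [Finite E] {T : Multigraph VT ET}
    {TA TB : Set VT} {G : Multigraph V E} {A B : Set V} {c : E → ET} (hT : T.IsTree)
    (hTbip : T.IsBipartition TA TB) (hGbip : G.IsBipartition A B) (hA : IsEquitableOn T TA G A c)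
    (hB : IsEquitableOn T TB G B c) :
    ∃ I : Type, Nonempty (ColourDecomposition T TA TB G A B c I) := by
  induction h : Nat.card ET generalizing VT ET E A B with
  | zero =>
    have : IsEmpty ET := Finite.card_eq_zero_iff.1 h
    exact ⟨Empty, nonempty_colourDecomposition_of_isEmpty c⟩
  | succ n ih =>
    rcases n.eq_zero_or_pos with rfl | hn
    · obtain ⟨_, ⟨j⟩⟩ := Nat.card_eq_one_iff_unique.1 h
      have := uniqueOfSubsingleton j
      exact ⟨E, nonempty_colourDecomposition_of_unique hTbip hGbip c⟩
    have : Nonempty ET := Finite.card_pos_iff.1 (by omega)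
    obtain ⟨t₀, ht₀⟩ := hT.exists_deg_eq_one
    wlog ht₀B : t₀ ∈ TB generalizing TA TB A B
    · have ht₀A : t₀ ∈ TA := (hTbip.2.1 ▸ Set.mem_univ t₀).resolve_right ht₀B
      obtain ⟨I, ⟨D⟩⟩ := this hTbip.symm hGbip.symm hB hA ht₀A
      exact ⟨I, ⟨D.swap⟩⟩
    obtain ⟨j₀, hj₀⟩ := exists_forall_mem_ends_iff_of_deg_eq_one ht₀
    obtain ⟨s, hsA, hj₀s⟩ := hTbip.symm.exists_ends_eq ht₀B ((hj₀ j₀).2 rfl)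
    have hs : s ≠ t₀ := by
      rintro rfl
      exact T.loopless j₀ (hj₀s ▸ Sym2.mk_isDiag_iff.2 rfl)
    have hj₀' : ∀ j, t₀ ∈ T.ends j → j = j₀ := fun j => (hj₀ j).1
    have hT' := hT.deleteLeaf hs hj₀' hj₀s
    have hcard' : Nat.card {j // j ≠ j₀} = n := by
      have := Nat.card_subtype_ne_add_one j₀
      omega
    obtain ⟨I, ⟨D⟩⟩ := ih hT' (hTbip.deleteLeaf hs hj₀') (hGbip.restrict _)
      (hA.deleteLeaf hs hj₀') (hB.deleteLeaf hs hj₀') hcard'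
    have : Nonempty {j // j ≠ j₀} := Finite.card_pos_iff.1 (by omega)
    obtain ⟨⟨j₁, hj₁⟩⟩ := Finite.card_pos_iff.1 (hT'.deg_pos ⟨s, hs⟩)
    exact ⟨I, D.nonempty_of_deleteLeaf hTbip hGbip hA ht₀B hsA hj₀s hj₁⟩

end Multigraph

open Multigraph in
theorem equitable_colouring_gives_homCopy_decomposition_general
    {VT ET V E : Type} [Fintype VT] [Fintype ET] [Fintype E]
    (T : Multigraph VT ET) (TA TB : Set VT)
    (G : Multigraph V E) (A B : Set V)
    (hT : T.IsTree) (hTbip : T.IsBipartition TA TB)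
    (hGbip : G.IsBipartition A B)
    (c : E → ET)
    (hA : ∀ v ∈ A, ∀ t ∈ TA, ∀ j k : ET, t ∈ T.ends j → t ∈ T.ends k →
        G.degCol c j v = G.degCol c k v)
    (hB : ∀ v ∈ B, ∀ t ∈ TB, ∀ j k : ET, t ∈ T.ends j → t ∈ T.ends k →
        G.degCol c j v = G.degCol c k v) :
    T.HomCopyDecomposition G := by
  obtain ⟨I, ⟨D⟩⟩ := exists_colourDecomposition hT hTbip hGbip hA hB
  exact D.homCopyDecomposition

open Multigraph in
/-- if a bipartite graph `G` admits a `T`-equitable edge-colouring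
(colours = edges of the tree `T`), then `G` has a `T*`-decomposition. -/
theorem equitable_colouring_gives_homCopy_decomposition
    {VT ET V E : Type} [Fintype VT] [Fintype ET] [Fintype V] [Fintype E]
    (T : Multigraph VT ET) (TA TB : Set VT)
    (G : Multigraph V E) (A B : Set V)
    (hT : T.IsTree) (hTbip : T.IsBipartition TA TB)
    (hleaf : ∃ t ∈ TB, T.deg t = 1)
    (hGbip : G.IsBipartition A B)
    (c : E → ET)
    (hA : ∀ v ∈ A, ∀ t ∈ TA, ∀ j k : ET, t ∈ T.ends j → t ∈ T.ends k →
        G.degCol c j v = G.degCol c k v)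
    (hB : ∀ v ∈ B, ∀ t ∈ TB, ∀ j k : ET, t ∈ T.ends j → t ∈ T.ends k →
        G.degCol c j v = G.degCol c k v) :
    T.HomCopyDecomposition G :=
  equitable_colouring_gives_homCopy_decomposition_general T TA TB G A B hT hTbip hGbip c hA hB
end

section
/- Let G be a connected graph (finite, loopless, possibly with multiple edges) with an even number of edges. Then G has an orientation in which every vertex has even out-degree. -/
/-! Reversing an edge `uv` adds `δ_u + δ_v` to the vector of out-degree parities in
`V → ZMod 2`, so reversing a set of edges adds an arbitrary element of the span of these edge
boundaries. In a connected graph, summing boundaries along a walk shows that this span contains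
every `δ_a + δ_b`, hence every vector with coordinate sum zero. The parity vector of any
orientation has coordinate sum `|E| = 0`, so reversing a suitable set of edges cancels it. -/

theorem Submodule.mem_of_sum_eq_zero_of_single_sub_single_mem {ι R : Type*} [Fintype ι]
    [DecidableEq ι] [CommRing R] {S : Submodule R (ι → R)}
    (hS : ∀ u v, Pi.single u 1 - Pi.single v 1 ∈ S) {h : ι → R}
    (hsum : ∑ i, h i = 0) : h ∈ S := by
  rcases isEmpty_or_nonempty ι with _ | ⟨⟨r⟩⟩
  · rw [Subsingleton.elim h 0]
    exact S.zero_mem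
  · have hdecomp : h = ∑ i, h i • (Pi.single i 1 - Pi.single r 1) := by
      rw [Finset.sum_congr rfl fun i _ => smul_sub (h i) _ _, Finset.sum_sub_distrib,
        ← Finset.sum_smul, hsum, zero_smul, sub_zero]
      conv_lhs => rw [← Finset.univ_sum_single h]
      simp [← Pi.single_smul']
    rw [hdecomp]
    exact S.sum_smul_mem _ fun i _ => hS i r

namespace Multigraph

variable {V E : Type}

def IsOrientation (G : Multigraph V E) (o : E → V × V) : Prop :=
  ∀ e, G.ends e = s((o e).1, (o e).2)

theorem exists_isOrientation (G : Multigraph V E) : ∃ o, G.IsOrientation o :=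
  ⟨fun e => (G.ends e).out, fun _ => (Quot.out_eq _).symm⟩

def reverseOn (o : E → V × V) (x : E → ZMod 2) (e : E) : V × V :=
  if x e = 1 then (o e).swap else o e

theorem isOrientation_reverseOn {G : Multigraph V E} {o : E → V × V} (ho : G.IsOrientation o)
    (x : E → ZMod 2) : G.IsOrientation (reverseOn o x) := by
  intro e
  unfold reverseOn
  split_ifs
  · rw [ho e, Prod.fst_swap, Prod.snd_swap, Sym2.eq_swap]
  · exact ho e

section Parity

variable [DecidableEq V]

noncomputable def edgeBoundary (G : Multigraph V E) (e : E) : V → ZMod 2 :=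
  Sym2.lift ⟨fun x y => Pi.single x 1 + Pi.single y 1, fun _ _ => add_comm _ _⟩ (G.ends e)

theorem edgeBoundary_eq_of_ends_eq {G : Multigraph V E} {e : E} {a b : V}
    (he : G.ends e = s(a, b)) : G.edgeBoundary e = Pi.single a 1 + Pi.single b 1 := by
  rw [edgeBoundary, he, Sym2.lift_mk]

theorem single_add_single_mem_span_edgeBoundary {G : Multigraph V E} {F : Set E} {a b : V}
    (h : Relation.ReflTransGen (G.Adj F) a b) :
    Pi.single a 1 + Pi.single b 1 ∈ Submodule.span (ZMod 2) (G.edgeBoundary '' F) := by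
  induction h with
  | refl => simp [ZModModule.add_self]
  | tail _ hbc ih =>
    obtain ⟨e, heF, he⟩ := hbc
    have hstep : G.edgeBoundary e ∈ Submodule.span (ZMod 2) (G.edgeBoundary '' F) :=
      Submodule.subset_span ⟨e, heF, rfl⟩
    rw [edgeBoundary_eq_of_ends_eq he] at hstep
    simpa only [ZModModule.add_add_add_cancel] using Submodule.add_mem _ ih hstep

noncomputable def outParity [Fintype E] (o : E → V × V) : V → ZMod 2 :=
  ∑ e, Pi.single (o e).1 1

theorem outParity_apply [Fintype E] (o : E → V × V) (v : V) :
    outParity o v = Nat.card {e : E // (o e).1 = v} := by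
  simp [outParity, Finset.sum_apply, Pi.single_apply, Finset.sum_boole, Fintype.card_subtype,
    eq_comm (a := v)]

theorem sum_outParity [Fintype V] [Fintype E] (o : E → V × V) :
    ∑ v, outParity o v = Fintype.card E := by
  simp only [outParity, Finset.sum_apply]
  rw [Finset.sum_comm]
  simp [Finset.sum_pi_single']

theorem outParity_reverseOn [Fintype E] {G : Multigraph V E} {o : E → V × V}
    (ho : G.IsOrientation o) (x : E → ZMod 2) :
    outParity (reverseOn o x) =
      outParity o + Fintype.linearCombination (ZMod 2) G.edgeBoundary x := by
  rw [Fintype.linearCombination_apply, outParity, outParity, ← Finset.sum_add_distrib]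
  refine Finset.sum_congr rfl fun e _ => ?_
  rw [edgeBoundary_eq_of_ends_eq (ho e), reverseOn]
  rcases (by decide : ∀ z : ZMod 2, z = 0 ∨ z = 1) (x e) with h | h <;> rw [h]
  · simp
  · rw [if_pos rfl, one_smul, ← add_assoc, ZModModule.add_self, zero_add, Prod.fst_swap]

end Parity

end Multigraph

open Multigraph in
/-- a finite connected multigraph with an even number of edges has an
orientation in which every vertex has even out-degree. -/
theorem orientation_even_outdegrees {V E : Type} [Fintype V] [Fintype E]
    (G : Multigraph V E) (hcon : G.Connected) (heven : 2 ∣ Nat.card E) :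
    ∃ o : E → V × V, (∀ e, G.ends e = s((o e).1, (o e).2)) ∧
      ∀ v : V, 2 ∣ Nat.card {e : E // (o e).1 = v} := by
  classical
  obtain ⟨o, ho⟩ := G.exists_isOrientation
  have hparity : outParity o ∈ (Fintype.linearCombination (ZMod 2) G.edgeBoundary).range := by
    rw [Fintype.range_linearCombination, ← Set.image_univ]
    refine Submodule.mem_of_sum_eq_zero_of_single_sub_single_mem (fun u v => ?_) ?_
    · rw [ZModModule.sub_eq_add]
      exact single_add_single_mem_span_edgeBoundary (hcon u v)
    · rwa [sum_outParity, ZMod.natCast_eq_zero_iff, ← Nat.card_eq_fintype_card]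
  obtain ⟨x, hx⟩ := hparity
  refine ⟨reverseOn o x, isOrientation_reverseOn ho x, fun v => ?_⟩
  rw [← ZMod.natCast_eq_zero_iff, ← outParity_apply, outParity_reverseOn ho, hx,
    ZModModule.add_self, Pi.zero_apply]
end

section
/- The infinite graph obtained from a star with infinitely many edges by subdividing all edges except one is connected, every vertex has finite or countably infinite degree, and every finite connected graph of even size decomposes into paths of length 2, yet this infinite graph has no decomposition into paths of length 2. -/
/-- Vertices of the subdivided infinite star: centre `c`, a leaf `u`, subdivision
vertices `w i` and leaves `v i`. -/
inductive StarV : Type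
  | c : StarV
  | u : StarV
  | w : ℕ → StarV
  | v : ℕ → StarV

/-- Edges of the subdivided infinite star: `cu`, and `cw i`, `wv i` for `i : ℕ`. -/
inductive StarE : Type
  | cu : StarE
  | cw : ℕ → StarE
  | wv : ℕ → StarE

/-- The infinite star with all edges but one subdivided. -/
def StarG : Multigraph StarV StarE where
  ends e := match e with
    | .cu => s(StarV.c, StarV.u)
    | .cw i => s(StarV.c, StarV.w i)
    | .wv i => s(StarV.w i, StarV.v i)
  loopless e := by cases e <;> simp [Sym2.isDiag_iff_proj_eq]

/-- The path with 2 edges on 3 vertices. -/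
def P3 : Multigraph (Fin 3) (Fin 2) where
  ends e := s(e.castSucc, e.succ)
  loopless e := by
    simp only [Sym2.isDiag_iff_proj_eq]
    exact (Fin.castSucc_lt_succ : e.castSucc < e.succ).ne

/-! ### Auxiliary development for the P3-decomposition theorem -/

namespace P3Aux

open Multigraph

variable {V E : Type} (G : Multigraph V E)

/-- Two edges share a vertex. -/
def Shares (e f : E) : Prop := ∃ v, v ∈ G.ends e ∧ v ∈ G.ends f

lemma Shares.symm {e f : E} (h : Shares G e f) : Shares G f e := by
  obtain ⟨v, h1, h2⟩ := h; exact ⟨v, h2, h1⟩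

/-- Relation on edges: both in `S` and sharing a vertex. -/
def Er (S : Set E) (e f : E) : Prop := e ∈ S ∧ f ∈ S ∧ Shares G e f

lemma er_symm (S : Set E) : Symmetric (Er G S) := by
  rintro a b ⟨h1, h2, h3⟩; exact ⟨h2, h1, h3.symm⟩

lemma rtg_er_symm {S : Set E} {a b : E} (h : Relation.ReflTransGen (Er G S) a b) :
    Relation.ReflTransGen (Er G S) b a :=
  by haveI : Std.Symm (Er G S) := ⟨fun _ _ h => er_symm G S h⟩
     exact Relation.ReflTransGen.symmetric.symm _ _ h

/-- Every pair of edges in `S` is joined by a chain of shared-vertex steps. -/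
def ChainConn (S : Set E) : Prop :=
  ∀ e ∈ S, ∀ f ∈ S, Relation.ReflTransGen (Er G S) e f

/-- `m` pairs up the edges of `T` into adjacent pairs. -/
def IsPairing (m : E → E) (T : Set E) : Prop :=
  ∀ e ∈ T, m e ∈ T ∧ m (m e) = e ∧ m e ≠ e ∧ Shares G e (m e)

lemma pairing_empty : ∃ m : E → E, IsPairing G m ∅ := ⟨id, fun e he => absurd he (by simp)⟩

lemma pairing_union {m₁ m₂ : E → E} {T₁ T₂ : Set E} (h₁ : IsPairing G m₁ T₁)
    (h₂ : IsPairing G m₂ T₂) (hd : Disjoint T₁ T₂) :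
    ∃ m, IsPairing G m (T₁ ∪ T₂) := by
  classical
  refine ⟨fun e => if e ∈ T₁ then m₁ e else m₂ e, ?_⟩
  rintro e (he | he)
  · obtain ⟨h1, h2, h3, h4⟩ := h₁ e he
    simp only [if_pos he, if_pos h1]
    exact ⟨Or.inl h1, h2, h3, h4⟩
  · have heT1 : e ∉ T₁ := fun h => Set.disjoint_left.mp hd h he
    obtain ⟨h1, h2, h3, h4⟩ := h₂ e he
    have h1' : m₂ e ∉ T₁ := fun h => Set.disjoint_left.mp hd h h1
    simp only [if_neg heT1, if_neg h1']
    exact ⟨Or.inr h1, h2, h3, h4⟩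

lemma pairing_insert {m : E → E} {T : Set E} {a b : E} (h : IsPairing G m T)
    (ha : a ∉ T) (hb : b ∉ T) (hab : a ≠ b) (hs : Shares G a b) :
    ∃ m', IsPairing G m' (T ∪ {a, b}) := by
  classical
  set m0 : E → E := fun e => if e = a then b else if e = b then a else e with hm0
  have hma : m0 a = b := by simp [hm0]
  have hmb : m0 b = a := by simp [hm0, Ne.symm hab]
  have hpair : IsPairing G m0 ({a, b} : Set E) := by
    intro e he
    rcases he with he | he
    · subst he
      rw [hma, hmb]
      exact ⟨Or.inr rfl, rfl, Ne.symm hab, hs⟩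
    · rw [Set.mem_singleton_iff] at he
      subst he
      rw [hmb, hma]
      exact ⟨Or.inl rfl, rfl, hab, hs.symm⟩
  have hd : Disjoint T ({a, b} : Set E) := by
    rw [Set.disjoint_right]; rintro x (rfl | rfl) <;> assumption
  exact pairing_union G h hpair hd

lemma pairing_congr {m : E → E} {T T' : Set E} (h : IsPairing G m T) (he : T = T') :
    IsPairing G m T' := he ▸ h

/-- a pairing pairs up an even number of edges -/
lemma even_card_of_pairing {m : E → E} :
    ∀ T : Finset E, IsPairing G m ↑T → Even T.card := by
  classical
  intro T
  induction T using Finset.strongInductionOn with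
  | _ T ih =>
    rcases T.eq_empty_or_nonempty with rfl | ⟨e, he⟩
    · simp
    · intro hT
      obtain ⟨h1, h2, h3, _⟩ := hT e (by exact_mod_cast he)
      have hmeT : m e ∈ T := by exact_mod_cast h1
      set U := (T.erase e).erase (m e) with hU
      have hUsub : U ⊆ T := (Finset.erase_subset _ _).trans (Finset.erase_subset _ _)
      have hUss : U ⊂ T := Finset.ssubset_of_subset_of_ssubset
        (Finset.erase_subset _ _) (Finset.erase_ssubset he)
      have hUP : IsPairing G m ↑U := by
        intro f hf
        have hfU : f ∈ U := by exact_mod_cast hf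
        have hfT : f ∈ T := hUsub hfU
        obtain ⟨g1, g2, g3, g4⟩ := hT f (by exact_mod_cast hfT)
        have hfe : f ≠ m e := (Finset.mem_erase.mp hfU).1
        have hfe' : f ≠ e := (Finset.mem_erase.mp (Finset.mem_erase.mp hfU).2).1
        have hmf : m f ∈ T := by exact_mod_cast g1
        have hmfe : m f ≠ e := by
          intro h; exact hfe (by rw [← g2, h])
        have hmfme : m f ≠ m e := by
          intro h
          apply hfe'
          have := congrArg m h
          rw [g2, h2] at this; exact this
        refine ⟨?_, g2, g3, g4⟩
        have : m f ∈ U := by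
          rw [hU]; exact Finset.mem_erase.mpr ⟨hmfme, Finset.mem_erase.mpr ⟨hmfe, hmf⟩⟩
        exact_mod_cast this
      have hcard : T.card = U.card + 2 := by
        have h5 : m e ∈ T.erase e := Finset.mem_erase.mpr ⟨h3, hmeT⟩
        rw [hU, Finset.card_erase_of_mem h5, Finset.card_erase_of_mem he]
        have c1 : 1 ≤ T.card := Finset.card_pos.mpr ⟨e, he⟩
        have c2 : 1 ≤ (T.erase e).card := Finset.card_pos.mpr ⟨m e, h5⟩
        have c3 : (T.erase e).card = T.card - 1 := Finset.card_erase_of_mem he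
        omega
      have := ih U hUss hUP
      rw [hcard, Nat.even_add]
      simpa using this

lemma mmem_of_rtg {S : Set E} {a b : E} (h : Relation.ReflTransGen (Er G S) a b) :
    a = b ∨ (a ∈ S ∧ b ∈ S) := by
  induction h with
  | refl => exact Or.inl rfl
  | tail hab step ih =>
    rcases ih with rfl | ⟨h1, h2⟩
    · exact Or.inr ⟨step.1, step.2.1⟩
    · exact Or.inr ⟨h1, step.2.1⟩

def oset (o : Option E) : Set E := o.elim ∅ (fun a => {a})

@[simp] lemma oset_none : oset (none : Option E) = ∅ := rfl

@[simp] lemma oset_some (a : E) : oset (some a) = {a} := rfl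

/-- Goal of the component-splitting lemma: pair up `S` leaving at most one
edge at `x` and at most one at `y`. -/
def Cgoal (S : Finset E) (x y : V) : Prop :=
  ∃ (ox oy : Option E) (m : E → E),
    IsPairing G m (↑S \ (oset ox ∪ oset oy)) ∧
    (∀ a, ox = some a → a ∈ S ∧ x ∈ G.ends a) ∧
    (∀ b, oy = some b → b ∈ S ∧ y ∈ G.ends b) ∧
    (∀ a b, ox = some a → oy = some b → a ≠ b)

/-- Hypothesis: every edge of `S` is chain-connected inside `S` to an edge at `x` or `y`. -/
def CHyp (S : Finset E) (x y : V) : Prop :=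
  ∀ f ∈ S, ∃ h, h ∈ S ∧ Relation.ReflTransGen (Er G ↑S) f h ∧ (x ∈ G.ends h ∨ y ∈ G.ends h)

/-- Goal of the main lemma: pair up `S`, leaving at most one edge, which contains `z`. -/
def Agoal (S : Finset E) (z : V) : Prop :=
  ∃ (o : Option E) (m : E → E),
    IsPairing G m (↑S \ oset o) ∧ (∀ a, o = some a → a ∈ S ∧ z ∈ G.ends a)

lemma lemA_of_lemC (n : ℕ)
    (hC : ∀ S : Finset E, S.card < n → ∀ x y : V, CHyp G S x y → Cgoal G S x y)
    (S : Finset E) (hn : S.card ≤ n) (hconn : ChainConn G ↑S)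
    (z : V) (e₀ : E) (he₀ : e₀ ∈ S) (hz : z ∈ G.ends e₀) : Agoal G S z := by
  classical
  set y := Sym2.Mem.other hz with hydef
  have hey : s(z, y) = G.ends e₀ := Sym2.other_spec hz
  have hyin : y ∈ G.ends e₀ := by rw [← hey]; exact Sym2.mem_mk_right _ _
  set S' := S.erase e₀ with hS'def
  have hcoeS' : (↑S' : Set E) = ↑S \ {e₀} := by
    rw [hS'def, Finset.coe_erase]
  have hchyp : CHyp G S' z y := by
    intro f hf
    have hfS : f ∈ S := Finset.mem_of_mem_erase hf
    have hchain : Relation.ReflTransGen (Er G ↑S) f e₀ :=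
      hconn f (by exact_mod_cast hfS) e₀ (by exact_mod_cast he₀)
    clear hfS
    revert hf
    induction hchain using Relation.ReflTransGen.head_induction_on with
    | refl =>
      intro hf
      exact absurd rfl (Finset.ne_of_mem_erase hf)
    | head step rest ih =>
      rename_i a c
      intro haS'
      by_cases hc : c = e₀
      · subst hc
        obtain ⟨v, hva, hve⟩ := step.2.2
        rw [← hey] at hve
        rcases Sym2.mem_iff.mp hve with rfl | rfl
        · exact ⟨a, haS', Relation.ReflTransGen.refl, Or.inl hva⟩
        · exact ⟨a, haS', Relation.ReflTransGen.refl, Or.inr hva⟩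
      · have hcS : c ∈ S := by exact_mod_cast step.2.1
        have hcS' : c ∈ S' := Finset.mem_erase.mpr ⟨hc, hcS⟩
        obtain ⟨h, hhS', hch, hxy⟩ := ih hcS'
        refine ⟨h, hhS', Relation.ReflTransGen.head ?_ hch, hxy⟩
        exact ⟨by exact_mod_cast haS', by exact_mod_cast hcS', step.2.2⟩
  have hScard : 1 ≤ S.card := Finset.card_pos.mpr ⟨e₀, he₀⟩
  have hcard' : S'.card < n := by
    have h1 : S'.card = S.card - 1 := Finset.card_erase_of_mem he₀
    omega
  obtain ⟨ox, oy, m, hm, hox, hoy, hne⟩ := hC S' hcard' z y hchyp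
  have he₀S' : e₀ ∉ ↑S' \ (oset ox ∪ oset oy) := by
    rw [hcoeS']; rintro ⟨⟨-, h⟩, -⟩; exact h rfl
  cases ox with
  | none =>
    cases oy with
    | none =>
      refine ⟨some e₀, m, pairing_congr G hm ?_, ?_⟩
      · rw [hcoeS']; simp
      · intro a ha
        rw [Option.some_inj] at ha
        subst ha
        exact ⟨he₀, hz⟩
    | some b =>
      obtain ⟨hbS', hyb⟩ := hoy b rfl
      have hbS : b ∈ S := Finset.mem_of_mem_erase hbS'
      have hbne : b ≠ e₀ := Finset.ne_of_mem_erase hbS'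
      have h2 : b ∉ ↑S' \ (oset none ∪ oset (some b)) := by simp
      obtain ⟨m', hm'⟩ := pairing_insert G hm he₀S' h2 (Ne.symm hbne) ⟨y, hyin, hyb⟩
      refine ⟨none, m', pairing_congr G hm' ?_, by simp [oset]⟩
      rw [hcoeS']
      ext t
      by_cases h1 : t = e₀ <;> by_cases h2 : t = b <;>
        simp_all [Set.mem_diff, Set.mem_insert_iff]
  | some a =>
    obtain ⟨haS', hza⟩ := hox a rfl
    have haS : a ∈ S := Finset.mem_of_mem_erase haS'
    have hane : a ≠ e₀ := Finset.ne_of_mem_erase haS'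
    cases oy with
    | none =>
      have h2 : a ∉ ↑S' \ (oset (some a) ∪ oset none) := by simp
      obtain ⟨m', hm'⟩ := pairing_insert G hm he₀S' h2 (Ne.symm hane) ⟨z, hz, hza⟩
      refine ⟨none, m', pairing_congr G hm' ?_, by simp [oset]⟩
      rw [hcoeS']
      ext t
      by_cases h1 : t = e₀ <;> by_cases h2 : t = a <;>
        simp_all [Set.mem_diff, Set.mem_insert_iff]
    | some b =>
      obtain ⟨hbS', hyb⟩ := hoy b rfl
      have hbS : b ∈ S := Finset.mem_of_mem_erase hbS'
      have hbne : b ≠ e₀ := Finset.ne_of_mem_erase hbS'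
      have hab : a ≠ b := hne a b rfl rfl
      have h2 : b ∉ ↑S' \ (oset (some a) ∪ oset (some b)) := by simp
      obtain ⟨m', hm'⟩ := pairing_insert G hm he₀S' h2 (Ne.symm hbne) ⟨y, hyin, hyb⟩
      refine ⟨some a, m', pairing_congr G hm' ?_, ?_⟩
      · rw [hcoeS']
        ext t
        by_cases h1 : t = e₀ <;> by_cases h2 : t = a <;> by_cases h3 : t = b <;>
          simp_all [Set.mem_diff, Set.mem_insert_iff]
      · intro a' ha'
        rw [Option.some_inj] at ha'
        subst ha'
        exact ⟨haS, hza⟩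

lemma cgoal_swap {S : Finset E} {x y : V} (h : Cgoal G S y x) : Cgoal G S x y := by
  obtain ⟨ox, oy, m, hm, hox, hoy, hne⟩ := h
  exact ⟨oy, ox, m, pairing_congr G hm (by rw [Set.union_comm]), hoy, hox,
    fun a b ha hb => (hne b a hb ha).symm⟩

lemma chyp_swap {S : Finset E} {x y : V} (h : CHyp G S y x) : CHyp G S x y := by
  intro f hf
  obtain ⟨h', h1, h2, h3⟩ := h f hf
  exact ⟨h', h1, h2, h3.symm⟩

lemma combine_lemma [DecidableEq E] {S C : Finset E} (hCS : C ⊆ S) {x y : V}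
    (hA : Agoal G C x) (hCg : Cgoal G (S \ C) x y) : Cgoal G S x y := by
  classical
  obtain ⟨o₁, m₁, hm₁, ho₁⟩ := hA
  obtain ⟨ox, oy, m₂, hm₂, hox, hoy, hne⟩ := hCg
  have hdisj : Disjoint (↑C : Set E) ↑(S \ C) := by
    rw [Finset.coe_sdiff]
    exact Set.disjoint_sdiff_right
  have hCR : (↑C : Set E) ∪ ↑(S \ C) = ↑S := by
    rw [Finset.coe_sdiff]
    exact Set.union_diff_cancel (by exact_mod_cast hCS)
  have hdom : Disjoint (↑C \ oset o₁ : Set E) (↑(S \ C) \ (oset ox ∪ oset oy)) :=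
    Set.disjoint_of_subset Set.diff_subset Set.diff_subset hdisj
  obtain ⟨m, hm⟩ := pairing_union G hm₁ hm₂ hdom
  have hmemCR : ∀ t : E, t ∈ C → t ∈ S \ C → False := by
    intro t h1 h2
    exact Set.disjoint_left.mp hdisj (by exact_mod_cast h1) (by exact_mod_cast h2)
  cases o₁ with
  | none =>
    refine ⟨ox, oy, m, pairing_congr G hm ?_, ?_, ?_, hne⟩
    · rw [← hCR]
      ext t
      simp only [Set.mem_union, Set.mem_diff, oset_none, Set.mem_empty_iff_false,
        not_false_iff, and_true, Set.diff_empty]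
      have h1 : t ∈ oset ox ∪ oset oy → (t ∈ (↑(S \ C) : Set E)) := by
        rintro (ht | ht)
        · cases ox with
          | none => simp at ht
          | some a => rw [oset_some, Set.mem_singleton_iff] at ht; subst ht
                      exact_mod_cast (hox t rfl).1
        · cases oy with
          | none => simp at ht
          | some b => rw [oset_some, Set.mem_singleton_iff] at ht; subst ht
                      exact_mod_cast (hoy t rfl).1
      have h2 : t ∈ (↑C : Set E) → t ∈ (↑(S \ C) : Set E) → False := by
        intro u1 u2; exact hmemCR t (by exact_mod_cast u1) (by exact_mod_cast u2)
      tauto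
    · intro a ha
      obtain ⟨h1, h2⟩ := hox a ha
      exact ⟨Finset.sdiff_subset h1, h2⟩
    · intro b hb
      obtain ⟨h1, h2⟩ := hoy b hb
      exact ⟨Finset.sdiff_subset h1, h2⟩
  | some ℓ =>
    obtain ⟨hℓC, hxℓ⟩ := ho₁ ℓ rfl
    have hℓS : ℓ ∈ S := hCS hℓC
    have hℓR : ℓ ∉ S \ C := fun h => hmemCR ℓ hℓC h
    have hℓdom : ℓ ∉ (↑C \ oset (some ℓ) : Set E) ∪ (↑(S \ C) \ (oset ox ∪ oset oy)) := by
      rintro (⟨-, h⟩ | ⟨h, -⟩)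
      · exact h rfl
      · exact hℓR (by exact_mod_cast h)
    cases ox with
    | some a =>
      obtain ⟨haR, hxa⟩ := hox a rfl
      have haS : a ∈ S := Finset.sdiff_subset haR
      have hℓa : ℓ ≠ a := fun h => hmemCR a (h ▸ hℓC) haR
      have hadom : a ∉ (↑C \ oset (some ℓ) : Set E) ∪ (↑(S \ C) \ (oset (some a) ∪ oset oy)) := by
        rintro (⟨h, -⟩ | ⟨-, h⟩)
        · exact hmemCR a (by exact_mod_cast h) haR
        · exact h (Or.inl rfl)
      obtain ⟨m', hm'⟩ := pairing_insert G hm hℓdom hadom hℓa ⟨x, hxℓ, hxa⟩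
      refine ⟨none, oy, m', pairing_congr G hm' ?_, by simp [oset], ?_, ?_⟩
      · rw [← hCR]
        ext t
        have hbR : ∀ b, oy = some b → b ∈ (↑(S \ C) : Set E) := by
          intro b hb; exact_mod_cast (hoy b hb).1
        have h2 : t ∈ (↑C : Set E) → t ∈ (↑(S \ C) : Set E) → False := by
          intro u1 u2; exact hmemCR t (by exact_mod_cast u1) (by exact_mod_cast u2)
        cases oy with
        | none =>
          simp only [Set.mem_union, Set.mem_diff, oset_none, oset_some, Set.union_empty,
            Set.mem_empty_iff_false, not_false_iff, and_true, Set.diff_empty,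
            Set.mem_singleton_iff, Set.mem_insert_iff]
          by_cases h3 : t = ℓ <;> by_cases h4 : t = a <;> subst_eqs <;> simp_all <;> tauto
        | some b =>
          obtain ⟨hbR', hyb⟩ := hoy b rfl
          have hab : a ≠ b := hne a b rfl rfl
          have hℓb : ℓ ≠ b := fun h => hmemCR b (h ▸ hℓC) hbR'
          simp only [Set.mem_union, Set.mem_diff, oset_none, oset_some, Set.empty_union,
            Set.mem_empty_iff_false, not_false_iff, and_true,
            Set.mem_singleton_iff, Set.mem_insert_iff]
          have hbRc : b ∈ (↑(S \ C) : Set E) := by exact_mod_cast hbR'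
          by_cases h3 : t = ℓ <;> by_cases h4 : t = a <;> by_cases h5 : t = b <;>
            subst_eqs <;> simp_all <;> tauto
      · intro b hb
        obtain ⟨h1, h2⟩ := hoy b hb
        exact ⟨Finset.sdiff_subset h1, h2⟩
      · intro a' b ha' hb
        exact absurd ha' (by simp)
    | none =>
      refine ⟨some ℓ, oy, m, pairing_congr G hm ?_, ?_, ?_, ?_⟩
      · rw [← hCR]
        ext t
        have h2 : t ∈ (↑C : Set E) → t ∈ (↑(S \ C) : Set E) → False := by
          intro u1 u2; exact hmemCR t (by exact_mod_cast u1) (by exact_mod_cast u2)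
        cases oy with
        | none =>
          simp only [Set.mem_union, Set.mem_diff, oset_none, oset_some, Set.union_empty,
            Set.mem_empty_iff_false, not_false_iff, and_true, Set.diff_empty,
            Set.mem_singleton_iff]
          by_cases h3 : t = ℓ <;> subst_eqs <;> simp_all <;> tauto
        | some b =>
          obtain ⟨hbR', hyb⟩ := hoy b rfl
          have hbRc : b ∈ (↑(S \ C) : Set E) := by exact_mod_cast hbR'
          have hℓb : ℓ ≠ b := fun h => hmemCR b (h ▸ hℓC) hbR'
          simp only [Set.mem_union, Set.mem_diff, oset_none, oset_some, Set.empty_union,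
            Set.mem_empty_iff_false, not_false_iff, and_true,
            Set.mem_singleton_iff, Set.mem_insert_iff]
          by_cases h3 : t = ℓ <;> by_cases h5 : t = b <;>
            subst_eqs <;> simp_all <;> tauto
      · intro a ha
        rw [Option.some_inj] at ha
        subst ha
        exact ⟨hℓS, hxℓ⟩
      · intro b hb
        obtain ⟨h1, h2⟩ := hoy b hb
        exact ⟨Finset.sdiff_subset h1, h2⟩
      · intro a b ha hb
        have hla : ℓ = a := Option.some_inj.mp ha
        subst hla
        exact fun h => hmemCR ℓ hℓC (by rw [h]; exact (hoy b hb).1)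

lemma cgoal_empty (x y : V) : Cgoal G (∅ : Finset E) x y := by
  refine ⟨none, none, id, ?_, by simp, by simp, by simp⟩
  intro e he
  simp at he

lemma lemC_all [DecidableEq E] :
    ∀ (n : ℕ) (S : Finset E), S.card ≤ n → ∀ x y : V, CHyp G S x y → Cgoal G S x y := by
  intro n
  induction n with
  | zero =>
    intro S hS x y _
    obtain rfl : S = ∅ := Finset.card_eq_zero.mp (Nat.le_zero.mp hS)
    exact cgoal_empty G x y
  | succ n ih =>
    intro S hS x y hchyp
    rcases S.eq_empty_or_nonempty with rfl | ⟨f, hf⟩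
    · exact cgoal_empty G x y
    classical
    set C := S.filter (fun g => Relation.ReflTransGen (Er G ↑S) f g) with hCdef
    have hmemC : ∀ g, g ∈ C ↔ g ∈ S ∧ Relation.ReflTransGen (Er G ↑S) f g := by
      intro g; rw [hCdef]; exact Finset.mem_filter
    have hCsub : C ⊆ S := Finset.filter_subset _ _
    have hfC : f ∈ C := (hmemC f).mpr ⟨hf, .refl⟩
    have hupg : ∀ g, Relation.ReflTransGen (Er G ↑S) f g →
        Relation.ReflTransGen (Er G ↑C) f g := by
      intro g hg
      induction hg with
      | refl => exact .refl
      | tail hb step ihh =>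
        rename_i b c
        have hbC : b ∈ C := (hmemC b).mpr ⟨by exact_mod_cast step.1, hb⟩
        have hcC : c ∈ C := (hmemC c).mpr ⟨by exact_mod_cast step.2.1, hb.tail step⟩
        exact ihh.tail ⟨by exact_mod_cast hbC, by exact_mod_cast hcC, step.2.2⟩
    have hconnC : ChainConn G ↑C := by
      intro g hg g' hg'
      have h1 := ((hmemC g).mp (by exact_mod_cast hg)).2
      have h2 := ((hmemC g').mp (by exact_mod_cast hg')).2
      exact (rtg_er_symm G (hupg g h1)).trans (hupg g' h2)
    obtain ⟨h, hhS, hfh, hhxy⟩ := hchyp f hf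
    have hhC : h ∈ C := (hmemC h).mpr ⟨hhS, hfh⟩
    have hout : ∀ f', f' ∈ S → f' ∉ C → ∀ g, Relation.ReflTransGen (Er G ↑S) f' g →
        Relation.ReflTransGen (Er G ↑(S \ C)) f' g := by
      intro f' hf'S hf'C g hg
      induction hg with
      | refl => exact .refl
      | tail hb step ihh =>
        rename_i b c
        have hbnC : b ∉ C := by
          intro hbC
          exact hf'C ((hmemC f').mpr ⟨hf'S, (((hmemC b).mp hbC).2).trans (rtg_er_symm G hb)⟩)
        have hcnC : c ∉ C := by
          intro hcC
          exact hf'C ((hmemC f').mpr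
            ⟨hf'S, (((hmemC c).mp hcC).2).trans (rtg_er_symm G (hb.tail step))⟩)
        have hbS : b ∈ S := by exact_mod_cast step.1
        have hcS : c ∈ S := by exact_mod_cast step.2.1
        refine ihh.tail ⟨?_, ?_, step.2.2⟩
        · exact_mod_cast Finset.mem_sdiff.mpr ⟨hbS, hbnC⟩
        · exact_mod_cast Finset.mem_sdiff.mpr ⟨hcS, hcnC⟩
    have hchypR : ∀ x' y', CHyp G S x' y' → CHyp G (S \ C) x' y' := by
      intro x' y' hch f' hf'
      have hf'S : f' ∈ S := (Finset.mem_sdiff.mp hf').1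
      have hf'C : f' ∉ C := (Finset.mem_sdiff.mp hf').2
      obtain ⟨h', hh'S, hf'h', hh'xy⟩ := hch f' hf'S
      have hch2 := hout f' hf'S hf'C h' hf'h'
      have hh'R : h' ∈ S \ C := by
        rcases mmem_of_rtg G hch2 with heq | ⟨-, h2⟩
        · exact heq ▸ hf'
        · exact_mod_cast h2
      exact ⟨h', hh'R, hch2, hh'xy⟩
    have hCcard : C.card ≤ n + 1 := le_trans (Finset.card_le_card hCsub) hS
    have hRcard : (S \ C).card ≤ n := by
      have h1 : (S \ C).card = S.card - C.card := Finset.card_sdiff_of_subset hCsub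
      have h2 : 1 ≤ C.card := Finset.card_pos.mpr ⟨f, hfC⟩
      omega
    have hCsmall : ∀ S' : Finset E, S'.card < C.card → ∀ x' y' : V,
        CHyp G S' x' y' → Cgoal G S' x' y' := by
      intro S' hS' x' y'
      exact ih S' (by omega) x' y'
    rcases hhxy with hx | hy
    · have hA : Agoal G C x := lemA_of_lemC G C.card hCsmall C le_rfl hconnC x h hhC hx
      exact combine_lemma G hCsub hA (ih (S \ C) hRcard x y (hchypR x y hchyp))
    · have hA : Agoal G C y := lemA_of_lemC G C.card hCsmall C le_rfl hconnC y h hhC hy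
      exact cgoal_swap G (combine_lemma G hCsub hA
        (ih (S \ C) hRcard y x (hchypR y x (chyp_swap G hchyp))))

lemma lemA_final [DecidableEq E] (S : Finset E) (hconn : ChainConn G ↑S) (z : V) (e₀ : E)
    (he₀ : e₀ ∈ S) (hz : z ∈ G.ends e₀) : Agoal G S z :=
  lemA_of_lemC G S.card (fun S' h x y hch => lemC_all G S'.card S' le_rfl x y hch)
    S le_rfl hconn z e₀ he₀ hz

lemma exists_mem_sym2 (s : Sym2 V) : ∃ a, a ∈ s := by
  induction s using Sym2.ind with
  | _ x y => exact ⟨x, Sym2.mem_mk_left x y⟩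

lemma walk_to_chain {v : V} {e : E} (hv : v ∈ G.ends e) :
    ∀ w, Relation.ReflTransGen (G.Adj Set.univ) v w →
      ∀ f, w ∈ G.ends f → Relation.ReflTransGen (Er G Set.univ) e f := by
  intro w hw
  induction hw with
  | refl => exact fun f hf => Relation.ReflTransGen.single ⟨trivial, trivial, v, hv, hf⟩
  | tail hb step ihh =>
    rename_i b c
    obtain ⟨g, -, hg⟩ := step
    have hbg : b ∈ G.ends g := by rw [hg]; exact Sym2.mem_mk_left _ _
    have hcg : c ∈ G.ends g := by rw [hg]; exact Sym2.mem_mk_right _ _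
    intro f hf
    exact (ihh g hbg).tail ⟨trivial, trivial, c, hcg, hf⟩

lemma chainconn_univ (hG : G.Connected) : ChainConn G (Set.univ : Set E) := by
  intro e _ f _
  obtain ⟨v, hv⟩ := exists_mem_sym2 (G.ends e)
  obtain ⟨w, hw⟩ := exists_mem_sym2 (G.ends f)
  exact walk_to_chain G hv w (hG v w) f hw

lemma homcopy_of_pair [DecidableEq E] {e f : E} (hef : e ≠ f) (hs : Shares G e f) :
    P3.IsHomCopyOn G ({e, f} : Set E) := by
  obtain ⟨v, hve, hvf⟩ := hs
  refine ⟨![Sym2.Mem.other hve, v, Sym2.Mem.other hvf],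
    ⟨fun i => if i = 0 then ⟨e, Set.mem_insert _ _⟩ else ⟨f, Set.mem_insert_of_mem _ rfl⟩,
     fun s => if (s : E) = e then 0 else 1, ?_, ?_⟩, ?_⟩
  · intro i
    fin_cases i
    · simp
    · simp [Ne.symm hef]
  · rintro ⟨t, (rfl | ht)⟩
    · simp
    · rw [Set.mem_singleton_iff] at ht
      subst ht
      simp [Ne.symm hef]
  · intro i
    fin_cases i
    · show G.ends e = (P3.ends 0).map _
      have hP : P3.ends 0 = s((0 : Fin 3), (1 : Fin 3)) := rfl
      rw [hP, Sym2.map_pair_eq]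
      simp only [Matrix.cons_val_zero, Matrix.cons_val_one, Matrix.head_cons]
      exact (Sym2.other_spec hve).symm.trans Sym2.eq_swap
    · show G.ends f = (P3.ends 1).map _
      have hP : P3.ends 1 = s((1 : Fin 3), (2 : Fin 3)) := rfl
      rw [hP, Sym2.map_pair_eq]
      simp only [Matrix.cons_val_one, Matrix.head_cons]
      have h2 : (![Sym2.Mem.other hve, v, Sym2.Mem.other hvf] : Fin 3 → V) 2
          = Sym2.Mem.other hvf := rfl
      rw [h2]
      exact (Sym2.other_spec hvf).symm

lemma pairing_to_decomp [DecidableEq E] {m : E → E} (hm : IsPairing G m Set.univ) :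
    P3.HomCopyDecomposition G := by
  refine ⟨Set.range (fun e : E => ({e, m e} : Set E)), ⟨?_, ?_⟩, ?_⟩
  · rintro ⟨e, he⟩
    have h1 : e ∈ ({e, m e} : Set E) := Or.inl rfl
    have he' : ({e, m e} : Set E) = ∅ := he
    rw [he'] at h1
    exact h1
  · intro a
    have ha := hm a trivial
    refine ⟨{a, m a}, ⟨⟨a, rfl⟩, Or.inl rfl⟩, ?_⟩
    rintro b ⟨⟨e, rfl⟩, hab⟩
    rcases hab with rfl | hab
    · rfl
    · rw [Set.mem_singleton_iff] at hab
      subst hab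
      rw [(hm e trivial).2.1, Set.pair_comm]
  · rintro S ⟨e, rfl⟩
    have he := hm e trivial
    exact homcopy_of_pair G (Ne.symm he.2.2.1) he.2.2.2

lemma block_struct {S : Set E} (h : P3.IsHomCopyOn G S) {a : E} (ha : a ∈ S) :
    ∃ b, b ≠ a ∧ S = {a, b} ∧ ∃ v, v ∈ G.ends a ∧ v ∈ G.ends b := by
  obtain ⟨f3, g, hg⟩ := h
  have h0 := hg 0
  have h1 := hg 1
  have hP0 : P3.ends 0 = s((0 : Fin 3), (1 : Fin 3)) := rfl
  have hP1 : P3.ends 1 = s((1 : Fin 3), (2 : Fin 3)) := rfl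
  rw [hP0, Sym2.map_pair_eq] at h0
  rw [hP1, Sym2.map_pair_eq] at h1
  have hv0 : f3 1 ∈ G.ends ↑(g 0) := by rw [h0]; exact Sym2.mem_mk_right _ _
  have hv1 : f3 1 ∈ G.ends ↑(g 1) := by rw [h1]; exact Sym2.mem_mk_left _ _
  have key : ∀ i : Fin 2, i = 0 ∨ i = 1 := by decide
  have hmem : ∀ s : E, s ∈ S → s = ↑(g 0) ∨ s = ↑(g 1) := by
    intro s hs
    have happ : ↑(g (g.symm ⟨s, hs⟩)) = s := by rw [g.apply_symm_apply]
    rcases key (g.symm ⟨s, hs⟩) with hi | hi <;> rw [hi] at happ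
    · exact Or.inl happ.symm
    · exact Or.inr happ.symm
  have hne : (↑(g 0) : E) ≠ ↑(g 1) := by
    intro hh
    have := g.injective (Subtype.ext hh)
    simp at this
  have hSeq : S = {(↑(g 0) : E), ↑(g 1)} := by
    ext s
    constructor
    · exact hmem s
    · intro hs
      rcases hs with rfl | hs
      · exact (g 0).2
      · rw [Set.mem_singleton_iff] at hs
        subst hs
        exact (g 1).2
  rcases hmem a ha with rfl | rfl
  · exact ⟨↑(g 1), hne.symm, hSeq, f3 1, hv0, hv1⟩
  · exact ⟨↑(g 0), hne, hSeq.trans (Set.pair_comm _ _), f3 1, hv1, hv0⟩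

end P3Aux

namespace P3Aux

def starENat : StarE → ℕ
  | .cu => 0
  | .cw i => 2*i+1
  | .wv i => 2*i+2

lemma starENat_inj : Function.Injective starENat := by
  intro a b h
  cases a <;> cases b <;> simp only [starENat] at h <;>
    first
      | rfl
      | (exact absurd h (by omega))
      | (congr 1 <;> omega)

lemma countable_StarE : Countable StarE := ⟨⟨starENat, starENat_inj⟩⟩

end P3Aux

open Multigraph in
/-- the subdivided infinite star is connected, every vertex has countable
(finite or countably infinite) degree, every finite connected graph of even size decomposes
into paths of length 2, yet the subdivided infinite star has no such decomposition. -/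
theorem infinite_star_no_P3_decomposition :
    StarG.Connected ∧
    (∀ v : StarV, Countable {e : StarE // v ∈ StarG.ends e}) ∧
    (∀ (V E : Type) [Fintype V] [Fintype E] (G : Multigraph V E),
        G.Connected → 2 ∣ Nat.card E → P3.HomCopyDecomposition G) ∧
    ¬ P3.HomCopyDecomposition StarG := by
  classical
  refine ⟨?_, ?_, ?_, ?_⟩
  · -- connectivity
    have key : ∀ v, Relation.ReflTransGen (StarG.Adj Set.univ) StarV.c v := by
      intro v
      cases v with
      | c => exact .refl
      | u => exact .single ⟨.cu, trivial, rfl⟩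
      | w i => exact .single ⟨.cw i, trivial, rfl⟩
      | v i =>
        exact (Relation.ReflTransGen.single ⟨.cw i, trivial, rfl⟩).tail ⟨.wv i, trivial, rfl⟩
    have hsym : Symmetric (StarG.Adj Set.univ) := by
      rintro a b ⟨e, he, hab⟩
      exact ⟨e, he, hab.trans Sym2.eq_swap⟩
    intro v w
    haveI : Std.Symm (StarG.Adj Set.univ) := ⟨fun _ _ h => hsym h⟩
    exact (Relation.ReflTransGen.symmetric.symm _ _ (key v)).trans (key w)
  · -- countable degrees
    intro v
    have : Countable StarE := P3Aux.countable_StarE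
    exact inferInstance
  · -- finite even connected graphs decompose
    intro V' E' _ _ G hconn hdvd
    by_cases hE : Nonempty E'
    case neg =>
      have hempty : IsEmpty E' := not_nonempty_iff.mp hE
      exact ⟨∅, ⟨Set.notMem_empty _, fun a => (hempty.false a).elim⟩,
        fun S hS => absurd hS (Set.notMem_empty _)⟩
    case pos =>
      obtain ⟨e₀⟩ := hE
      obtain ⟨z, hz⟩ := P3Aux.exists_mem_sym2 (G.ends e₀)
      have hconn' : P3Aux.ChainConn G ↑(Finset.univ : Finset E') := by
        rw [Finset.coe_univ]
        exact P3Aux.chainconn_univ G hconn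
      obtain ⟨o, m, hm, ho⟩ :=
        P3Aux.lemA_final G Finset.univ hconn' z e₀ (Finset.mem_univ _) hz
      cases o with
      | some ℓ =>
        exfalso
        have hdom : ((Finset.univ : Finset E') : Set E') \ P3Aux.oset (some ℓ)
            = ↑(Finset.univ.erase ℓ) := by
          rw [Finset.coe_erase, P3Aux.oset_some]
        have hev := P3Aux.even_card_of_pairing G (Finset.univ.erase ℓ)
          (P3Aux.pairing_congr G hm hdom)
        have h1 : (Finset.univ.erase ℓ).card = Fintype.card E' - 1 := by
          rw [Finset.card_erase_of_mem (Finset.mem_univ _), Finset.card_univ]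
        have h2 : Nat.card E' = Fintype.card E' := Nat.card_eq_fintype_card
        have h3 : 0 < Fintype.card E' := Fintype.card_pos_iff.mpr ⟨e₀⟩
        obtain ⟨k, hk⟩ := hdvd
        rw [Nat.even_iff] at hev
        omega
      | none =>
        have hdom : ((Finset.univ : Finset E') : Set E') \ P3Aux.oset none = Set.univ := by
          rw [P3Aux.oset_none, Set.diff_empty, Finset.coe_univ]
        exact P3Aux.pairing_to_decomp G (P3Aux.pairing_congr G hm hdom)
  · -- StarG has no P3-decomposition
    rintro ⟨P, ⟨hne, hblocks⟩, hcopy⟩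
    obtain ⟨Bu, ⟨hBuP, hcuBu⟩, -⟩ := hblocks StarE.cu
    obtain ⟨e', he'ne, hBu, v, hvcu, hve'⟩ :=
      P3Aux.block_struct StarG (hcopy Bu hBuP) hcuBu
    have hvcu' : v = StarV.c ∨ v = StarV.u := by
      have h : StarG.ends .cu = s(StarV.c, StarV.u) := rfl
      rw [h, Sym2.mem_iff] at hvcu
      exact hvcu
    cases e' with
    | cu => exact he'ne rfl
    | wv i =>
      have h : StarG.ends (.wv i) = s(StarV.w i, StarV.v i) := rfl
      rw [h, Sym2.mem_iff] at hve'
      rcases hvcu' with rfl | rfl <;> rcases hve' with h' | h' <;> exact StarV.noConfusion h'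
    | cw i =>
      obtain ⟨Bw, ⟨hBwP, hwvBw⟩, -⟩ := hblocks (StarE.wv i)
      obtain ⟨e'', he''ne, hBw, v', hv'wv, hv'e''⟩ :=
        P3Aux.block_struct StarG (hcopy Bw hBwP) hwvBw
      have hv' : v' = StarV.w i ∨ v' = StarV.v i := by
        have h : StarG.ends (.wv i) = s(StarV.w i, StarV.v i) := rfl
        rw [h, Sym2.mem_iff] at hv'wv
        exact hv'wv
      have he''eq : e'' = StarE.cw i := by
        cases e'' with
        | cu =>
          have h : StarG.ends .cu = s(StarV.c, StarV.u) := rfl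
          rw [h, Sym2.mem_iff] at hv'e''
          rcases hv' with rfl | rfl <;> rcases hv'e'' with h' | h' <;>
            exact StarV.noConfusion h'
        | cw j =>
          have h : StarG.ends (.cw j) = s(StarV.c, StarV.w j) := rfl
          rw [h, Sym2.mem_iff] at hv'e''
          rcases hv' with rfl | rfl <;> rcases hv'e'' with h' | h'
          · exact StarV.noConfusion h'
          · injection h' with hij; rw [hij]
          · exact StarV.noConfusion h'
          · exact StarV.noConfusion h'
        | wv j =>
          exfalso
          have h : StarG.ends (.wv j) = s(StarV.w j, StarV.v j) := rfl
          rw [h, Sym2.mem_iff] at hv'e''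
          rcases hv' with rfl | rfl <;> rcases hv'e'' with h' | h'
          · injection h' with hij; exact he''ne (congrArg StarE.wv hij.symm)
          · exact StarV.noConfusion h'
          · exact StarV.noConfusion h'
          · injection h' with hij; exact he''ne (congrArg StarE.wv hij.symm)
      subst he''eq
      obtain ⟨Bc, -, huniq⟩ := hblocks (StarE.cw i)
      have h1 : Bu = Bc := huniq Bu ⟨hBuP, by rw [hBu]; exact Or.inr rfl⟩
      have h2 : Bw = Bc := huniq Bw ⟨hBwP, by rw [hBw]; exact Or.inr rfl⟩
      rw [h1, ← h2, hBw] at hcuBu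
      rcases hcuBu with h' | h'
      · exact StarE.noConfusion h'
      · exact StarE.noConfusion h'
end
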